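/- arXiv:1903.06087 — 7 statements merged into one kernel-verified Lean document; each statement's English description precedes it below -/
import Mathlib

section
/- Let G be a finite simple graph with maximum degree Δ. If G is C₅-free (contains no cycle on 5 vertices as a subgraph), then ω₂'(G) ≤ Δ². -/
open SimpleGraph

/-- `G.ContainsSub H` means `G` contains a copy of `H` as a (not necessarily induced)
subgraph, i.e. there is an injective graph homomorphism from `H` to `G`. -/
def SimpleGraph.ContainsSub {V W : Type*} (G : SimpleGraph V) (H : SimpleGraph W) : Prop :=
  ∃ f : W → V, Function.Injective f ∧ ∀ a b, H.Adj a b → G.Adj (f a) (f b)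

/-- A strong clique of `G`: a set of edges of `G` any two distinct members of which
either share an endpoint or have endpoints joined by an edge of `G`. -/
def SimpleGraph.IsStrongClique {V : Type*} (G : SimpleGraph V) (F : Finset (Sym2 V)) : Prop :=
  (F : Set (Sym2 V)) ⊆ G.edgeSet ∧
    ∀ e ∈ F, ∀ f ∈ F, e ≠ f → ∃ x ∈ e, ∃ y ∈ f, x = y ∨ G.Adj x y

/-- The strong clique number `ω₂'(G)`: the largest cardinality of a strong clique. -/
noncomputable def SimpleGraph.strongCliqueNumber {V : Type*} (G : SimpleGraph V) : ℕ :=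
  sSup {n | ∃ F : Finset (Sym2 V), G.IsStrongClique F ∧ F.card = n}

/-!
Let `x` maximise the `F`-degree `d_F` and let `Y` be the `F`-neighbours of `x`, so `|Y| = d_F(x)`.
Edges of `F` meeting `N(x)` number at most `∑_{v ∈ N(x)} d_F(v)`. An edge of `F` avoiding `N(x)`
must be joined to each edge `xy` (`y ∈ Y`) by an adjacency into `y`, and `C₅`-freeness forces one
of its endpoints `β` to be adjacent to all of `Y`. Since `d_F(β) ≤ |Y|` and the edges `βy ∈ F`
with `y ∈ Y` also sit at `β`, at most `#{y ∈ Y | βy ∉ F}` such edges have `β` as this endpoint.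
Double counting bounds them by `∑_{y ∈ Y} (deg y - d_F y)`, whence
`|F| ≤ ∑_{v ∈ N(x)} deg v ≤ Δ²`.
-/

open Finset

namespace SimpleGraph

variable {V : Type*} {G : SimpleGraph V} {F : Finset (Sym2 V)}

theorem containsSub_cycleGraph_five {v₀ v₁ v₂ v₃ v₄ : V}
    (h₀₁ : G.Adj v₀ v₁) (h₁₂ : G.Adj v₁ v₂) (h₂₃ : G.Adj v₂ v₃) (h₃₄ : G.Adj v₃ v₄)
    (h₄₀ : G.Adj v₄ v₀) (n₀₂ : v₀ ≠ v₂) (n₀₃ : v₀ ≠ v₃) (n₁₃ : v₁ ≠ v₃) (n₁₄ : v₁ ≠ v₄)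
    (n₂₄ : v₂ ≠ v₄) : G.ContainsSub (cycleGraph 5) := by
  refine ⟨![v₀, v₁, v₂, v₃, v₄], ?_, fun a b hab => ?_⟩
  · have := h₀₁.ne; have := h₁₂.ne; have := h₂₃.ne; have := h₃₄.ne; have := h₄₀.ne
    intro i j hij
    fin_cases i <;> fin_cases j <;> simp_all
  · fin_cases a <;> fin_cases b <;> first | exact absurd hab (by decide) | simp_all [G.adj_comm]

namespace IsStrongClique

theorem adj_or_adj_of_not_adj (hF : G.IsStrongClique F) {x y p q : V} (hxy : s(x, y) ∈ F)
    (hpq : s(p, q) ∈ F) (hp : ¬ G.Adj x p) (hq : ¬ G.Adj x q) : G.Adj p y ∨ G.Adj q y := by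
  have hx : x ∉ s(p, q) := by
    have := G.mem_edgeSet.mp (hF.1 hpq)
    rw [Sym2.mem_iff]
    rintro (rfl | rfl)
    exacts [hq this, hp this.symm]
  obtain ⟨u, hu, w, hw, huw⟩ := hF.2 _ hpq _ hxy fun h => hx (h ▸ Sym2.mem_mk_left x y)
  have hxu : ¬ G.Adj x u := by rcases Sym2.mem_iff.mp hu with rfl | rfl <;> assumption
  have huy : G.Adj u y := by
    rcases Sym2.mem_iff.mp hw with rfl | rfl <;> rcases huw with rfl | huw
    exacts [absurd hu hx, absurd huw.symm hxu, absurd (G.mem_edgeSet.mp (hF.1 hxy)) hxu, huw]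
  rcases Sym2.mem_iff.mp hu with rfl | rfl
  exacts [Or.inl huy, Or.inr huy]

theorem exists_mem_forall_adj (hfree : ¬ G.ContainsSub (cycleGraph 5)) (hF : G.IsStrongClique F)
    {x : V} {b : Sym2 V} (hb : b ∈ F) (hfar : ∀ v ∈ b, ¬ G.Adj x v) :
    ∃ β ∈ b, ∀ y, s(x, y) ∈ F → G.Adj β y := by
  induction b using Sym2.inductionOn with
  | hf p q =>
    by_contra! h
    obtain ⟨y₁, hxy₁, hpy₁⟩ := h p (Sym2.mem_mk_left p q)
    obtain ⟨y₂, hxy₂, hqy₂⟩ := h q (Sym2.mem_mk_right p q)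
    have hp := hfar p (Sym2.mem_mk_left p q)
    have hq := hfar q (Sym2.mem_mk_right p q)
    have hqy₁ := (hF.adj_or_adj_of_not_adj hxy₁ hb hp hq).resolve_left hpy₁
    have hpy₂ := (hF.adj_or_adj_of_not_adj hxy₂ hb hp hq).resolve_right hqy₂
    have hpq := G.mem_edgeSet.mp (hF.1 hb)
    have hx₁ := G.mem_edgeSet.mp (hF.1 hxy₁)
    have hx₂ := G.mem_edgeSet.mp (hF.1 hxy₂)
    -- `x y₁ q p y₂` is a 5-cycle
    refine hfree (containsSub_cycleGraph_five hx₁ hqy₁.symm hpq.symm hpy₂ hx₂.symm ?_ ?_ ?_ ?_ ?_)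
    · rintro rfl; exact hp hpq.symm
    · rintro rfl; exact hq hpq
    · rintro rfl; exact hp hx₁
    · rintro rfl; exact hpy₁ hpy₂
    · rintro rfl; exact hq hx₂

end IsStrongClique

section Counting

variable [Fintype V] [DecidableEq V] [DecidableRel G.Adj]

theorem card_filter_mk_mem_eq (F : Finset (Sym2 V)) (v : V) :
    #{w | s(v, w) ∈ F} = #{e ∈ F | v ∈ e} := by
  rw [← card_image_of_injective _ fun _ _ => (Sym2.congr_right (a := v)).mp]
  congr 1
  ext e
  simp only [mem_image, mem_filter, mem_univ, true_and, Sym2.mem_iff_exists]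
  constructor
  · rintro ⟨w, hw, rfl⟩
    exact ⟨hw, w, rfl⟩
  · rintro ⟨he, w, rfl⟩
    exact ⟨w, he, rfl⟩

theorem card_filter_mem_add_card_incidenceFinset_sdiff (hF : (F : Set (Sym2 V)) ⊆ G.edgeSet)
    (v : V) :
    #{e ∈ F | v ∈ e} + #(G.incidenceFinset v \ F) = G.degree v := by
  have : G.incidenceFinset v ∩ F = {e ∈ F | v ∈ e} := by
    ext e
    simp only [mem_inter, mem_incidenceFinset, mem_filter, incidenceSet]
    exact ⟨fun ⟨⟨_, hv⟩, he⟩ => ⟨he, hv⟩, fun ⟨he, hv⟩ => ⟨⟨hF he, hv⟩, he⟩⟩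
  rw [← this, card_inter_add_card_sdiff, card_incidenceFinset_eq_degree]

theorem card_filter_forall_not_adj_mem_le (hF : (F : Set (Sym2 V)) ⊆ G.edgeSet) {x β : V}
    (hβ : #{e ∈ F | β ∈ e} ≤ #{e ∈ F | x ∈ e}) :
    #{b ∈ F | (∀ v ∈ b, ¬ G.Adj x v) ∧ β ∈ b} ≤ #{y | s(x, y) ∈ F ∧ s(β, y) ∉ F} := by
  set far := {b ∈ F | (∀ v ∈ b, ¬ G.Adj x v) ∧ β ∈ b}
  set shared := ({y | s(x, y) ∈ F ∧ s(β, y) ∈ F} : Finset V).image (s(β, ·))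
  -- `βy` with `xy ∈ F` has the endpoint `y ∈ N(x)`
  have hdisj : Disjoint far shared := by
    rw [Finset.disjoint_left]
    simp only [far, shared, mem_filter, mem_image, mem_univ, true_and, not_exists, not_and]
    rintro _ ⟨-, hfar, -⟩ y ⟨hxy, -⟩ rfl
    exact hfar y (Sym2.mem_mk_right β y) (G.mem_edgeSet.mp (hF hxy))
  have hsub : far ∪ shared ⊆ {e ∈ F | β ∈ e} := by
    rw [union_subset_iff]
    simp only [far, shared, subset_iff, mem_filter, mem_image, mem_univ, true_and]
    refine ⟨fun b ⟨hb, _, hβ⟩ => ⟨hb, hβ⟩, ?_⟩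
    rintro _ ⟨y, ⟨-, hβy⟩, rfl⟩
    exact ⟨hβy, Sym2.mem_mk_left β y⟩
  have hshared : #shared = #{y | s(x, y) ∈ F ∧ s(β, y) ∈ F} :=
    card_image_of_injective _ fun _ _ => (Sym2.congr_right (a := β)).mp
  have hsplit : #{y | s(x, y) ∈ F ∧ s(β, y) ∈ F} + #{y | s(x, y) ∈ F ∧ s(β, y) ∉ F}
      = #{y | s(x, y) ∈ F} := by
    rw [← filter_filter, ← filter_filter, card_filter_add_card_filter_not]
  have hcard := card_le_card hsub
  rw [card_union_of_disjoint hdisj, hshared] at hcard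
  rw [← card_filter_mk_mem_eq F x] at hβ
  omega

theorem IsStrongClique.card_filter_forall_not_adj_le (hfree : ¬ G.ContainsSub (cycleGraph 5))
    (hF : G.IsStrongClique F) {x : V} (hmax : ∀ v, #{e ∈ F | v ∈ e} ≤ #{e ∈ F | x ∈ e}) :
    #{b ∈ F | ∀ v ∈ b, ¬ G.Adj x v} ≤ ∑ y ∈ G.neighborFinset x, #(G.incidenceFinset y \ F) := by
  set Y : Finset V := {y | s(x, y) ∈ F}
  set hubs : Finset V := {β | ∀ y, s(x, y) ∈ F → G.Adj β y}
  calc #{b ∈ F | ∀ v ∈ b, ¬ G.Adj x v}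
      ≤ ∑ β ∈ hubs, #{b ∈ F | (∀ v ∈ b, ¬ G.Adj x v) ∧ β ∈ b} := by
        refine (card_le_card fun b hb => ?_).trans card_biUnion_le
        obtain ⟨hbF, hfar⟩ := mem_filter.mp hb
        obtain ⟨β, hβb, hβ⟩ := hF.exists_mem_forall_adj hfree hbF hfar
        exact mem_biUnion.mpr ⟨β, mem_filter.mpr ⟨mem_univ _, hβ⟩, mem_filter.mpr ⟨hbF, hfar, hβb⟩⟩
    _ ≤ ∑ β ∈ hubs, #{y ∈ Y | s(β, y) ∉ F} := by
        refine sum_le_sum fun β _ => ?_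
        rw [filter_filter]
        exact card_filter_forall_not_adj_mem_le hF.1 (hmax β)
    _ = ∑ y ∈ Y, #{β ∈ hubs | s(β, y) ∉ F} :=
        sum_card_bipartiteAbove_eq_sum_card_bipartiteBelow _
    _ ≤ ∑ y ∈ Y, #(G.incidenceFinset y \ F) := by
        refine sum_le_sum fun y hy => card_le_card_of_injOn (s(·, y)) (fun β hβ => ?_)
          fun _ _ _ _ => Sym2.congr_left.mp
        obtain ⟨hβ, hβy⟩ := mem_filter.mp hβ
        have hadj := (mem_filter.mp hβ).2 y (mem_filter.mp hy).2
        exact mem_sdiff.mpr ⟨(G.mem_incidenceFinset _ _).mpr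
          ⟨G.mem_edgeSet.mpr hadj, Sym2.mem_mk_right β y⟩, hβy⟩
    _ ≤ ∑ y ∈ G.neighborFinset x, #(G.incidenceFinset y \ F) := by
        refine sum_le_sum_of_subset fun y hy => ?_
        exact (G.mem_neighborFinset x y).mpr (G.mem_edgeSet.mp (hF.1 (mem_filter.mp hy).2))

theorem IsStrongClique.card_le_sum_degree (hfree : ¬ G.ContainsSub (cycleGraph 5))
    (hF : G.IsStrongClique F) {x : V} (hmax : ∀ v, #{e ∈ F | v ∈ e} ≤ #{e ∈ F | x ∈ e}) :
    #F ≤ ∑ v ∈ G.neighborFinset x, G.degree v := by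
  have hnear : #{e ∈ F | ∃ v ∈ e, G.Adj x v} ≤ ∑ v ∈ G.neighborFinset x, #{e ∈ F | v ∈ e} := by
    refine (card_le_card fun e he => ?_).trans card_biUnion_le
    obtain ⟨heF, v, hve, hxv⟩ := mem_filter.mp he
    exact mem_biUnion.mpr ⟨v, (G.mem_neighborFinset x v).mpr hxv, mem_filter.mpr ⟨heF, hve⟩⟩
  calc #F = #{e ∈ F | ∃ v ∈ e, G.Adj x v} + #{e ∈ F | ∀ v ∈ e, ¬ G.Adj x v} := by
        rw [← card_filter_add_card_filter_not (fun e => ∃ v ∈ e, G.Adj x v) (s := F)]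
        simp only [not_exists, not_and]
    _ ≤ ∑ v ∈ G.neighborFinset x, (#{e ∈ F | v ∈ e} + #(G.incidenceFinset v \ F)) := by
        rw [sum_add_distrib]
        exact add_le_add hnear (hF.card_filter_forall_not_adj_le hfree hmax)
    _ = ∑ v ∈ G.neighborFinset x, G.degree v :=
        sum_congr rfl fun v _ => card_filter_mem_add_card_incidenceFinset_sdiff hF.1 v

theorem IsStrongClique.card_le_maxDegree_sq (hfree : ¬ G.ContainsSub (cycleGraph 5))
    (hF : G.IsStrongClique F) : #F ≤ G.maxDegree ^ 2 := by
  rcases isEmpty_or_nonempty V with _ | _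
  · simp [eq_empty_of_isEmpty F]
  obtain ⟨x, hx⟩ := Finite.exists_max fun v => #{e ∈ F | v ∈ e}
  calc #F ≤ ∑ v ∈ G.neighborFinset x, G.degree v := hF.card_le_sum_degree hfree hx
    _ ≤ #(G.neighborFinset x) • G.maxDegree :=
        sum_le_card_nsmul _ _ _ fun v _ => G.degree_le_maxDegree v
    _ ≤ G.maxDegree ^ 2 := by
        rw [card_neighborFinset_eq_degree, smul_eq_mul, sq]
        exact Nat.mul_le_mul_right _ (G.degree_le_maxDegree x)

end Counting

end SimpleGraph

/-- Theorem 1.4(2): if `G` is `C₅`-free with maximum degree `Δ`, then `ω₂'(G) ≤ Δ²`. -/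
theorem strongCliqueNumber_le_of_c5Free {V : Type*} [Fintype V] [DecidableEq V]
    (G : SimpleGraph V) [DecidableRel G.Adj] (Δ : ℕ) (hΔ : G.maxDegree = Δ)
    (hfree : ¬ G.ContainsSub (cycleGraph 5)) :
    G.strongCliqueNumber ≤ Δ ^ 2 := by
  subst hΔ
  refine csSup_le' ?_
  rintro n ⟨F, hF, rfl⟩
  exact hF.card_le_maxDegree_sq hfree
end

section
/- Let G be a finite simple graph that is C₅-free (contains no cycle on 5 vertices as a subgraph), and let H be a subgraph of G whose edge set is a strong clique of G, i.e., any two distinct edges of H either share an endpoint or some endpoint of one is adjacent in G to some endpoint of the other. Then the number of edges of H satisfies e(H) ≤ Δ(H)·(σ_G(H) − Δ(H)), and consequently 4·e(H) ≤ σ_G(H)², where Δ(H) is the maximum degree of H and σ_G(H) is the maximum over edges xy of H of deg_G(x) + deg_G(y) (taken to be 0 if H has no edges). -/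
open SimpleGraph

/-- The Ore-degree `σ_G(H)` of a subgraph `H` in `G`: the maximum over edges `xy` of `H`
of `deg_G x + deg_G y` (`0` if `H` has no edges). -/
def SimpleGraph.oreDegreeOn {V : Type*} [Fintype V] [DecidableEq V] (G H : SimpleGraph V)
    [DecidableRel G.Adj] [DecidableRel H.Adj] : ℕ :=
  H.edgeFinset.sup fun e =>
    Sym2.lift ⟨fun x y => G.degree x + G.degree y, fun _ _ => Nat.add_comm _ _⟩ e

/-! Let `u` be a vertex of maximum `H`-degree `t` and `N = N_H(u)`. Every edge of `H` either
meets `N_G(u)` or, by the strong clique property and `C₅`-freeness, joins a common `G`-neighbour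
`x` of `N` to a vertex outside `N`. Edges at `N_G(u) \ N` cost at most `t` per vertex; since
`deg_H x ≤ t = #N`, the edges from such an `x` leaving `N` are at most its `H`-non-neighbours in
`N`, and double counting charges these to the vertices `v ∈ N`, which have room for them inside
`deg_G v`. Altogether `e(H) + t² ≤ ∑_{v ∈ N} (deg_G v + deg_G u) ≤ t σ_G(H)`. -/

open Finset

lemma Finset.sum_add_card_mul_le_sum_add_card_mul {ι : Type*} [DecidableEq ι] {s t : Finset ι}
    (hst : s ⊆ t) {f : ι → ℕ} {c : ℕ} (hf : ∀ i ∈ t \ s, f i ≤ c) :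
    ∑ i ∈ t, f i + #s * c ≤ ∑ i ∈ s, f i + #t * c := by
  have : ∑ i ∈ t \ s, f i ≤ #(t \ s) * c := by simpa using sum_le_card_nsmul (t \ s) f c hf
  rw [← sum_sdiff hst, ← card_sdiff_add_card_eq_card hst, add_mul]
  omega

namespace SimpleGraph

variable {V : Type*} {G H : SimpleGraph V}

lemma containsSub_cycleGraph_five_s8 {a b c d e : V} (hab : G.Adj a b) (hbc : G.Adj b c)
    (hcd : G.Adj c d) (hde : G.Adj d e) (hea : G.Adj e a)
    (hac : a ≠ c) (had : a ≠ d) (hbd : b ≠ d) (hbe : b ≠ e) (hce : c ≠ e) :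
    G.ContainsSub (cycleGraph 5) := by
  have := hab.ne; have := hbc.ne; have := hcd.ne; have := hde.ne; have := hea.ne
  refine ⟨![a, b, c, d, e], fun i j hij => ?_, fun i j hij => ?_⟩
  · fin_cases i <;> fin_cases j <;> simp_all
  · rw [cycleGraph_adj'] at hij
    fin_cases i <;> fin_cases j <;> simp_all [G.adj_comm] <;> contradiction

/-- Two neighbours `w₁, w₂` of `u` with `w₁ ≁ a`, `w₂ ≁ b` would close the 5-cycle
`u w₁ b a w₂`. -/
lemma forall_adj_or_forall_adj_of_not_containsSub_cycleGraph_five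
    (hfree : ¬ G.ContainsSub (cycleGraph 5)) {u a b : V} {S : Set V}
    (hS : ∀ w ∈ S, G.Adj u w) (hab : G.Adj a b) (hua : ¬ G.Adj u a) (hub : ¬ G.Adj u b)
    (hau : a ≠ u) (hbu : b ≠ u) (hcover : ∀ w ∈ S, G.Adj w a ∨ G.Adj w b) :
    (∀ w ∈ S, G.Adj w a) ∨ ∀ w ∈ S, G.Adj w b := by
  by_contra! h
  obtain ⟨⟨w₁, hw₁, hw₁a⟩, ⟨w₂, hw₂, hw₂b⟩⟩ := h
  have hw₁b := (hcover w₁ hw₁).resolve_left hw₁a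
  have hw₂a := (hcover w₂ hw₂).resolve_right hw₂b
  refine hfree (containsSub_cycleGraph_five_s8 (hS w₁ hw₁) hw₁b hab.symm hw₂a.symm
    (hS w₂ hw₂).symm hbu.symm hau.symm (fun h => hua (h ▸ hS w₁ hw₁))
    (fun h => hw₁a (h ▸ hw₂a)) (fun h => hub (h ▸ hS w₂ hw₂)))

lemma IsStrongClique.adj_or_adj {F : Finset (Sym2 V)} (hF : G.IsStrongClique F)
    {u w a b : V} (hab : s(a, b) ∈ F) (huw : s(u, w) ∈ F) (hGuw : G.Adj u w)
    (hua : ¬ G.Adj u a) (hub : ¬ G.Adj u b) (hau : a ≠ u) (hbu : b ≠ u) :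
    G.Adj w a ∨ G.Adj w b := by
  have hne : s(a, b) ≠ s(u, w) := fun h => by simp_all
  obtain ⟨x, hx, y, hy, hxy⟩ := hF.2 _ hab _ huw hne
  rw [Sym2.mem_iff] at hx hy
  rcases hx with rfl | rfl <;> rcases hy with rfl | rfl <;> rcases hxy with rfl | hxy <;>
    simp_all [G.adj_comm]

/-- An edge `ab` of `H` avoiding the closed `G`-neighbourhood of `u` must, by the strong clique
property, see every edge `uw` of `H`; then `C₅`-freeness puts all of `N_H(u)` next to one end. -/
lemma adj_or_adj_or_forall_adj_of_isStrongClique [Fintype H.edgeSet] (hHG : H ≤ G)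
    (hfree : ¬ G.ContainsSub (cycleGraph 5)) (hclique : G.IsStrongClique H.edgeFinset)
    (u : V) {a b : V} (hab : H.Adj a b) :
    G.Adj u a ∨ G.Adj u b ∨ (∀ w, H.Adj u w → G.Adj w a) ∧ ¬ H.Adj u b ∨
      (∀ w, H.Adj u w → G.Adj w b) ∧ ¬ H.Adj u a := by
  by_cases hua : G.Adj u a
  · exact .inl hua
  by_cases hub : G.Adj u b
  · exact .inr (.inl hub)
  have hau : a ≠ u := by rintro rfl; exact hub (hHG hab)
  have hbu : b ≠ u := by rintro rfl; exact hua (hHG hab.symm)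
  have hcover : ∀ w ∈ {w | H.Adj u w}, G.Adj w a ∨ G.Adj w b := fun w huw =>
    hclique.adj_or_adj (mem_edgeFinset.2 hab) (mem_edgeFinset.2 huw) (hHG huw) hua hub hau hbu
  rcases forall_adj_or_forall_adj_of_not_containsSub_cycleGraph_five hfree (fun w huw => hHG huw)
    (hHG hab) hua hub hau hbu hcover with ha | hb
  · exact .inr (.inr (.inl ⟨ha, fun h => hub (hHG h)⟩))
  · exact .inr (.inr (.inr ⟨hb, fun h => hua (hHG h)⟩))

section Counting

variable [DecidableEq V]

lemma card_biUnion_image_mk_le (A : Finset V) (S : V → Finset V) :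
    #(A.biUnion fun a => (S a).image (s(a, ·))) ≤ ∑ a ∈ A, #(S a) :=
  card_biUnion_le.trans (sum_le_sum fun _ _ => card_image_le)

variable [Fintype V] [DecidableRel H.Adj]

/-- Both sides count the non-adjacent pairs, and `#(N_H(x) \ N) ≤ #(N \ N_H(x))` as
`deg_H x ≤ #N`. -/
lemma sum_card_neighborFinset_sdiff_le {X N : Finset V} (hdeg : ∀ x ∈ X, H.degree x ≤ #N) :
    ∑ x ∈ X, #(H.neighborFinset x \ N) ≤ ∑ v ∈ N, #(X \ H.neighborFinset v) := calc
  _ ≤ ∑ x ∈ X, #(N.bipartiteAbove (fun x v => ¬ H.Adj x v) x) := sum_le_sum fun x hx => by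
    have hN : N.bipartiteAbove (fun x v => ¬ H.Adj x v) x = N \ H.neighborFinset x := by
      ext; simp [bipartiteAbove]
    rw [hN, card_sdiff_le_card_sdiff_iff, card_neighborFinset_eq_degree]
    exact hdeg x hx
  _ = ∑ v ∈ N, #(X.bipartiteBelow (fun x v => ¬ H.Adj x v) v) :=
    sum_card_bipartiteAbove_eq_sum_card_bipartiteBelow _
  _ = _ := sum_congr rfl fun v _ => by
    congr 1; ext x; simp [bipartiteBelow, H.adj_comm]

lemma degree_add_card_sdiff_neighborFinset_le [DecidableRel G.Adj] (hHG : H ≤ G) {v : V}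
    {X : Finset V} (hX : ∀ x ∈ X, G.Adj v x) :
    H.degree v + #(X \ H.neighborFinset v) ≤ G.degree v := by
  rw [← card_neighborFinset_eq_degree, ← card_neighborFinset_eq_degree, add_comm,
    card_sdiff_add_card]
  refine card_le_card (union_subset (fun x hx => ?_) fun x hx => ?_)
  · simpa using hX x hx
  · simpa using hHG ((mem_neighborFinset _ _ _).1 hx)

lemma degree_add_degree_le_oreDegreeOn [DecidableRel G.Adj] {u v : V} (huv : H.Adj u v) :
    G.degree u + G.degree v ≤ G.oreDegreeOn H := by
  simpa [oreDegreeOn] using le_sup (f := fun e => Sym2.lift ⟨fun x y => G.degree x + G.degree y,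
    fun _ _ => Nat.add_comm _ _⟩ e) (mem_edgeFinset.2 huv : s(u, v) ∈ H.edgeFinset)

lemma card_edgeFinset_le_of_isStrongClique [DecidableRel G.Adj] (hHG : H ≤ G)
    (hfree : ¬ G.ContainsSub (cycleGraph 5)) (hclique : G.IsStrongClique H.edgeFinset) (u : V) :
    #H.edgeFinset ≤ ∑ v ∈ G.neighborFinset u, H.degree v +
      ∑ x ∈ ({x | ∀ w ∈ H.neighborFinset u, G.Adj w x} : Finset V),
        #(H.neighborFinset x \ H.neighborFinset u) := by
  set N := H.neighborFinset u
  set X : Finset V := {x | ∀ w ∈ N, G.Adj w x}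
  have hcover : H.edgeFinset ⊆
      (G.neighborFinset u).biUnion (fun v => (H.neighborFinset v).image (s(v, ·))) ∪
        X.biUnion fun x => (H.neighborFinset x \ N).image (s(x, ·)) := by
    intro e he
    induction e using Sym2.ind with | _ a b => ?_
    rw [mem_edgeFinset, mem_edgeSet] at he
    rcases adj_or_adj_or_forall_adj_of_isStrongClique hHG hfree hclique u he with
      ha | hb | ⟨ha, hb⟩ | ⟨hb, ha⟩
    · exact mem_union_left _ (mem_biUnion.2 ⟨a, by simpa, mem_image.2 ⟨b, by simpa, rfl⟩⟩)
    · exact mem_union_left _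
        (mem_biUnion.2 ⟨b, by simpa, mem_image.2 ⟨a, by simpa using he.symm, Sym2.eq_swap⟩⟩)
    · exact mem_union_right _
        (mem_biUnion.2 ⟨a, by simpa [X, N] using ha, mem_image.2 ⟨b, by simp [N, he, hb], rfl⟩⟩)
    · exact mem_union_right _ (mem_biUnion.2
        ⟨b, by simpa [X, N] using hb, mem_image.2 ⟨a, by simp [N, he.symm, ha], Sym2.eq_swap⟩⟩)
  refine (card_le_card hcover).trans ((card_union_le _ _).trans
    (add_le_add ?_ (card_biUnion_image_mk_le _ _)))
  exact (card_biUnion_image_mk_le _ _).trans_eq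
    (sum_congr rfl fun v _ => card_neighborFinset_eq_degree H v)

theorem card_edgeFinset_add_degree_mul_self_le [DecidableRel G.Adj] (hHG : H ≤ G)
    (hfree : ¬ G.ContainsSub (cycleGraph 5)) (hclique : G.IsStrongClique H.edgeFinset) {u : V}
    (hu : ∀ x, H.degree x ≤ H.degree u) :
    #H.edgeFinset + H.degree u * H.degree u ≤
      ∑ v ∈ H.neighborFinset u, (G.degree v + G.degree u) := by
  have hE := card_edgeFinset_le_of_isStrongClique hHG hfree hclique u
  set N := H.neighborFinset u
  set X : Finset V := {x | ∀ w ∈ N, G.Adj w x}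
  have hN : #N = H.degree u := card_neighborFinset_eq_degree H u
  have hNG : ∑ v ∈ G.neighborFinset u, H.degree v + H.degree u * H.degree u ≤
      ∑ v ∈ N, H.degree v + G.degree u * H.degree u := by
    have := sum_add_card_mul_le_sum_add_card_mul (s := N) (t := G.neighborFinset u)
      (f := fun v => H.degree v) (c := H.degree u)
      (fun v hv => by simpa using hHG ((mem_neighborFinset ..).1 hv)) fun v _ => hu v
    rwa [hN, card_neighborFinset_eq_degree] at this
  have hX := sum_card_neighborFinset_sdiff_le (X := X) (N := N) fun x _ => hN ▸ hu x
  have hdeg : ∀ v ∈ N, H.degree v + #(X \ H.neighborFinset v) ≤ G.degree v := fun v hv =>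
    degree_add_card_sdiff_neighborFinset_le hHG fun x hx => (mem_filter.1 hx).2 v hv
  calc #H.edgeFinset + H.degree u * H.degree u
      ≤ ∑ v ∈ N, (H.degree v + #(X \ H.neighborFinset v)) + G.degree u * H.degree u := by
        rw [sum_add_distrib]; omega
    _ ≤ ∑ v ∈ N, G.degree v + G.degree u * H.degree u := by gcongr with v hv; exact hdeg v hv
    _ = ∑ v ∈ N, (G.degree v + G.degree u) := by
        rw [sum_add_distrib, sum_const, hN, smul_eq_mul, mul_comm]

end Counting

end SimpleGraph

/-- Lemma 2.2 (simple-graph version): if `G` is `C₅`-free and `H ≤ G` is a subgraph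
whose edge set is a strong clique of `G`, then
`e(H) ≤ Δ(H) · (σ_G(H) - Δ(H))` and `4 · e(H) ≤ σ_G(H)²`. -/
theorem card_edge_le_of_strongClique_c5Free {V : Type*} [Fintype V] [DecidableEq V]
    (G H : SimpleGraph V) [DecidableRel G.Adj] [DecidableRel H.Adj] (hHG : H ≤ G)
    (hfree : ¬ G.ContainsSub (cycleGraph 5))
    (hclique : G.IsStrongClique H.edgeFinset) :
    H.edgeFinset.card ≤ H.maxDegree * (G.oreDegreeOn H - H.maxDegree) ∧
    4 * H.edgeFinset.card ≤ (G.oreDegreeOn H) ^ 2 := by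
  rcases isEmpty_or_nonempty V with hV | hV
  · simp [eq_empty_of_isEmpty]
  obtain ⟨u, hu⟩ := H.exists_maximal_degree_vertex
  have hmain : #H.edgeFinset + H.maxDegree * H.maxDegree ≤ H.maxDegree * G.oreDegreeOn H := by
    rw [hu]
    refine (card_edgeFinset_add_degree_mul_self_le hHG hfree hclique fun x =>
      hu ▸ H.degree_le_maxDegree x).trans ?_
    have := sum_le_card_nsmul _ _ _ fun v hv => (add_comm _ _).trans_le
      (degree_add_degree_le_oreDegreeOn (G := G) ((mem_neighborFinset H u v).1 hv))
    rwa [card_neighborFinset_eq_degree, smul_eq_mul] at this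
  constructor
  · rw [Nat.mul_sub]; omega
  · zify at hmain ⊢
    nlinarith [sq_nonneg ((G.oreDegreeOn H : ℤ) - 2 * H.maxDegree)]
end

section
/- Fix an integer k ≥ 2. Let G be a finite simple graph and X a subset of its vertex set. Suppose the bipartite subgraph of G consisting of exactly those edges with one endpoint in X and one endpoint outside X contains no path on 2k+1 vertices as a subgraph. Call an edge uv of G with u ∈ X and v ∉ X k-branching out of X if v has at least k neighbours in X. Then the number of edges of G that are k-branching out of X is at most k²·|X|. -/
open SimpleGraph

/-- The bipartite subgraph of `G` consisting of exactly those edges with one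
endpoint in `S` and the other endpoint in `T`. -/
def SimpleGraph.betweenGraph {V : Type*} (G : SimpleGraph V) (S T : Set V) : SimpleGraph V where
  Adj a b := G.Adj a b ∧ ((a ∈ S ∧ b ∈ T) ∨ (a ∈ T ∧ b ∈ S))
  symm := by
    constructor
    intro a b h
    exact ⟨h.1.symm, h.2.elim (fun hab => Or.inr ⟨hab.2, hab.1⟩) (fun hab => Or.inl ⟨hab.2, hab.1⟩)⟩
  loopless := by
    constructor
    intro a h
    exact G.loopless.irrefl a h.1

/-!
Strong induction on `X`. If every vertex of `X` had more than `k` neighbours among the outside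
vertices with at least `k` neighbours in `X`, a greedy alternating walk started at such an
outside vertex would not get stuck before reaching `2k+1` vertices, giving a `P_{2k+1}`. So
some `x ∈ X` has at most `k` of them. Deleting `x` removes these at most `k` edges, and the
outside vertices that then drop below `k` neighbours are among them and remove at most `k - 1`
further edges each: at most `k + k(k - 1) = k²` edges in total.
-/

open Finset

namespace SimpleGraph

variable {V : Type*}

lemma containsSub_pathGraph_of_isChain (H : SimpleGraph V) {l : List V} (hnd : l.Nodup)
    (hch : l.IsChain H.Adj) : H.ContainsSub (pathGraph l.length) := by
  refine ⟨fun i => l.get i, List.nodup_iff_injective_get.mp hnd, fun a b hab => ?_⟩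
  rw [List.isChain_iff_getElem] at hch
  obtain ⟨a, ha⟩ := a
  obtain ⟨b, hb⟩ := b
  rcases pathGraph_adj.mp hab with rfl | rfl
  · exact hch a hb
  · exact (hch b ha).symm

lemma betweenGraph_adj_of_mem_of_mem (G : SimpleGraph V) {S T : Set V} {v w : V} (hv : v ∈ T)
    (hw : w ∈ S) : (G.betweenGraph S T).Adj v w ↔ G.Adj v w :=
  ⟨And.left, fun h => ⟨h, Or.inr ⟨hv, hw⟩⟩⟩

variable [DecidableEq V]

lemma card_filter_edge_le_sum [Fintype V] (G : SimpleGraph V) [DecidableRel G.Adj]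
    (X : Finset V) (P : V → Prop) [DecidablePred P] :
    #(G.edgeFinset.filter fun e => ∃ u v, e = s(u, v) ∧ u ∈ X ∧ v ∉ X ∧ P v) ≤
      ∑ v ∈ Xᶜ.filter P, #(X.filter (G.Adj v)) := by
  calc _ ≤ #((Xᶜ.filter P).biUnion fun v => (X.filter (G.Adj v)).image fun u => s(u, v)) := by
        refine card_le_card fun e he => ?_
        obtain ⟨he, u, v, rfl, hu, hv, hP⟩ := mem_filter.mp he
        rw [mem_edgeFinset] at he
        simp only [mem_biUnion, mem_image, mem_filter, mem_compl]
        exact ⟨v, ⟨hv, hP⟩, u, ⟨hu, he.symm⟩, rfl⟩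
    _ ≤ ∑ v ∈ Xᶜ.filter P, #((X.filter (G.Adj v)).image fun u => s(u, v)) := card_biUnion_le
    _ ≤ _ := sum_le_sum fun _ _ => card_image_le

variable (H : SimpleGraph V) [DecidableRel H.Adj] {A B : Finset V} {k : ℕ}

lemma exists_adj_notMem_of_card_lt {s : Finset V} {v : V}
    (h : #(s ∩ A) < #(A.filter (H.Adj v))) : ∃ w ∈ A, H.Adj v w ∧ w ∉ s := by
  obtain ⟨w, hw, hws⟩ := exists_mem_notMem_of_card_lt_card h
  rw [mem_filter] at hw
  exact ⟨w, hw.1, hw.2, fun h => hws (mem_inter.mpr ⟨h, hw.1⟩)⟩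

/-- The counts bound how many neighbours of the head are already used, so the chain can be
extended by a fresh neighbour in `A` and then a fresh neighbour in `B` while `i < k`. -/
lemma exists_alternating_chain (hAB : Disjoint A B)
    (hA : ∀ x ∈ A, k + 1 ≤ #(B.filter (H.Adj x)))
    (hB : ∀ y ∈ B, k ≤ #(A.filter (H.Adj y))) {y₀ : V} (hy₀ : y₀ ∈ B) :
    ∀ i ≤ k, ∃ y ∈ B, ∃ t : List V, t.length = 2 * i ∧ (y :: t).Nodup ∧
      (y :: t).IsChain H.Adj ∧ #((y :: t).toFinset ∩ A) ≤ i ∧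
      #((y :: t).toFinset ∩ B) ≤ i + 1
  | 0, _ => ⟨y₀, hy₀, [], rfl, List.nodup_singleton _, List.isChain_singleton _,
      by simp [Finset.disjoint_right.mp hAB hy₀], by simp [hy₀]⟩
  | i + 1, hi => by
    obtain ⟨y, hy, t, hlen, hnd, hch, hcA, hcB⟩ :=
      exists_alternating_chain hAB hA hB hy₀ i (by omega)
    obtain ⟨x, hxA, hyx, hx⟩ :=
      H.exists_adj_notMem_of_card_lt (s := (y :: t).toFinset) (A := A) (v := y)
        (by have := hB y hy; omega)
    have hxB : x ∉ B := Finset.disjoint_left.mp hAB hxA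
    obtain ⟨y', hy'B, hxy', hy'⟩ :=
      H.exists_adj_notMem_of_card_lt (s := (x :: y :: t).toFinset) (A := B) (v := x)
        (by rw [List.toFinset_cons, insert_inter_of_notMem hxB]; have := hA x hxA; omega)
    have hy'A : y' ∉ A := Finset.disjoint_right.mp hAB hy'B
    refine ⟨y', hy'B, x :: y :: t, by simp [hlen]; ring, ?_, ?_, ?_, ?_⟩
    · exact List.nodup_cons.mpr
        ⟨by simpa using hy', List.nodup_cons.mpr ⟨by simpa using hx, hnd⟩⟩
    · exact (hch.cons_cons hyx.symm).cons_cons hxy'.symm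
    · rw [List.toFinset_cons, List.toFinset_cons, insert_inter_of_notMem hy'A,
        insert_inter_of_mem hxA]
      exact (card_insert_le _ _).trans (by omega)
    · rw [List.toFinset_cons, List.toFinset_cons, insert_inter_of_mem hy'B,
        insert_inter_of_notMem hxB]
      exact (card_insert_le _ _).trans (by omega)

lemma exists_card_filter_adj_le (hP : ¬ H.ContainsSub (pathGraph (2 * k + 1)))
    (hAB : Disjoint A B) (hB : ∀ y ∈ B, k ≤ #(A.filter (H.Adj y))) (hBne : B.Nonempty) :
    ∃ x ∈ A, #(B.filter (H.Adj x)) ≤ k := by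
  by_contra! hA
  obtain ⟨y₀, hy₀⟩ := hBne
  obtain ⟨y, -, t, hlen, hnd, hch, -⟩ := H.exists_alternating_chain hAB hA hB hy₀ k le_rfl
  have := H.containsSub_pathGraph_of_isChain hnd hch
  rw [List.length_cons, hlen] at this
  exact hP this

lemma card_filter_adj_eq_erase_add {x : V} (hx : x ∈ A) (y : V) :
    #(A.filter (H.Adj y)) = #((A.erase x).filter (H.Adj y)) + if H.Adj y x then 1 else 0 := by
  rw [filter_erase]
  split_ifs with h
  · exact (card_erase_add_one (mem_filter.mpr ⟨hx, h⟩)).symm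
  · rw [erase_eq_of_notMem fun h' => h (mem_filter.mp h').2, add_zero]

lemma sum_card_filter_adj_le_erase {x : V} (hx : x ∈ A) (hxB : #(B.filter (H.Adj x)) ≤ k)
    (hB : ∀ y ∈ B, k ≤ #(A.filter (H.Adj y))) :
    ∑ y ∈ B, #(A.filter (H.Adj y)) ≤
      ∑ y ∈ B.filter (fun y => k ≤ #((A.erase x).filter (H.Adj y))),
        #((A.erase x).filter (H.Adj y)) + k ^ 2 := by
  set A' := A.erase x
  have hsplit : ∑ y ∈ B, #(A.filter (H.Adj y)) =
      ∑ y ∈ B, #(A'.filter (H.Adj y)) + #(B.filter (H.Adj x)) := by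
    rw [sum_congr rfl fun y _ => H.card_filter_adj_eq_erase_add hx y, sum_add_distrib,
      ← card_filter]
    simp only [H.adj_comm _ x]
    rfl
  rw [hsplit, ← sum_filter_add_sum_filter_not B fun y => k ≤ #(A'.filter (H.Adj y))]
  set D := B.filter fun y => ¬ k ≤ #(A'.filter (H.Adj y))
  have hD : D ⊆ B.filter (H.Adj x) := fun y hy => by
    obtain ⟨hyB, hy⟩ := mem_filter.mp hy
    have hdeg : #(A.filter (H.Adj y)) = #(A'.filter (H.Adj y)) + _ :=
      H.card_filter_adj_eq_erase_add hx y
    have hk := hB y hyB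
    refine mem_filter.mpr ⟨hyB, H.adj_symm ?_⟩
    by_contra h
    rw [if_neg h] at hdeg
    omega
  have hDsum : ∑ y ∈ D, (#(A'.filter (H.Adj y)) + 1) ≤ #D * k :=
    sum_le_card_nsmul _ _ _ fun y hy => by have := (mem_filter.mp hy).2; omega
  rw [sum_add_distrib, sum_const, smul_eq_mul, mul_one] at hDsum
  have := card_le_card hD
  nlinarith

theorem sum_card_filter_adj_le (hP : ¬ H.ContainsSub (pathGraph (2 * k + 1)))
    (hAB : Disjoint A B) (hB : ∀ y ∈ B, k ≤ #(A.filter (H.Adj y))) :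
    ∑ y ∈ B, #(A.filter (H.Adj y)) ≤ k ^ 2 * #A := by
  induction A using Finset.strongInduction generalizing B with
  | H A ih =>
    rcases B.eq_empty_or_nonempty with rfl | hBne
    · simp
    obtain ⟨x, hx, hxB⟩ := H.exists_card_filter_adj_le hP hAB hB hBne
    calc _ ≤ _ + k ^ 2 := H.sum_card_filter_adj_le_erase hx hxB hB
      _ ≤ k ^ 2 * #(A.erase x) + k ^ 2 := by
          gcongr
          exact ih _ (erase_ssubset hx) (hAB.mono (erase_subset _ _) (filter_subset _ _))
            fun y hy => (mem_filter.mp hy).2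
      _ = k ^ 2 * #A := by rw [← card_erase_add_one hx]; ring

end SimpleGraph

theorem card_branching_le_general {V : Type*} [Fintype V] [DecidableEq V]
    (k : ℕ) (G : SimpleGraph V) [DecidableRel G.Adj] (X : Finset V)
    (hP : ¬ (G.betweenGraph ↑X (↑X)ᶜ).ContainsSub (pathGraph (2 * k + 1))) :
    (G.edgeFinset.filter fun e => ∃ u v, e = s(u, v) ∧ u ∈ X ∧ v ∉ X ∧
      k ≤ (X.filter fun w => G.Adj v w).card).card ≤ k ^ 2 * X.card := by
  classical
  set K := G.betweenGraph ↑X (↑X)ᶜ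
  set Y := Xᶜ.filter fun v => k ≤ #(X.filter (G.Adj v))
  have hK : ∀ v ∈ Y, X.filter (G.Adj v) = X.filter (K.Adj v) := fun v hv =>
    filter_congr fun w hw => (G.betweenGraph_adj_of_mem_of_mem
      (by simpa using (mem_filter.mp hv).1) (by simpa using hw)).symm
  calc _ ≤ ∑ v ∈ Y, #(X.filter (G.Adj v)) := G.card_filter_edge_le_sum X _
    _ = ∑ v ∈ Y, #(X.filter (K.Adj v)) := sum_congr rfl fun v hv => by rw [hK v hv]
    _ ≤ k ^ 2 * #X :=
      K.sum_card_filter_adj_le hP (disjoint_compl_right.mono_right (filter_subset _ _))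
        fun v hv => hK v hv ▸ (mem_filter.mp hv).2

/-- Lemma 3.1: if the bipartite subgraph of `G` between `X` and its complement is
`P_{2k+1}`-free, then at most `k²|X|` edges are `k`-branching out of `X`. -/
theorem card_branching_le {V : Type*} [Fintype V] [DecidableEq V]
    (k : ℕ) (hk : 2 ≤ k) (G : SimpleGraph V) [DecidableRel G.Adj] (X : Finset V)
    (hP : ¬ (G.betweenGraph ↑X (↑X)ᶜ).ContainsSub (pathGraph (2 * k + 1))) :
    (G.edgeFinset.filter fun e => ∃ u v, e = s(u, v) ∧ u ∈ X ∧ v ∉ X ∧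
      k ≤ (X.filter fun w => G.Adj v w).card).card ≤ k ^ 2 * X.card :=
  card_branching_le_general k G X hP
end

section
/- Let G be a finite simple graph that contains no cycle on 3 vertices and no cycle on 5 vertices as a subgraph. Then there exists a set S of vertices of G such that the induced subgraph G[S] is bipartite and ω₂'(G[S]) = ω₂'(G). -/
open SimpleGraph

lemma noC3 {V : Type*} {G : SimpleGraph V} (h3 : ¬ G.ContainsSub (cycleGraph 3))
    {a b c : V} (hab : G.Adj a b) (hbc : G.Adj b c) (hca : G.Adj a c) : False := by
  apply h3
  have h1 := hab.ne; have h2 := hbc.ne; have h3' := hca.ne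
  refine ⟨![a,b,c], ?_, ?_⟩
  · intro i j hij
    fin_cases i <;> fin_cases j <;> simp_all
  · intro i j hadj
    fin_cases i <;> fin_cases j <;>
      first
      | (exact absurd hadj (by decide))
      | simp_all [G.adj_symm, hab, hbc, hca, hab.symm, hbc.symm, hca.symm]

lemma noC5 {V : Type*} {G : SimpleGraph V} (h5 : ¬ G.ContainsSub (cycleGraph 5))
    {a b c d e : V} (hab : G.Adj a b) (hbc : G.Adj b c) (hcd : G.Adj c d)
    (hde : G.Adj d e) (hea : G.Adj e a)
    (hac : a ≠ c) (had : a ≠ d) (hbd : b ≠ d) (hbe : b ≠ e) (hce : c ≠ e) : False := by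
  apply h5
  have h1 := hab.ne; have h2 := hbc.ne; have h3' := hcd.ne
  have h4 := hde.ne; have h6 := hea.ne.symm
  refine ⟨![a,b,c,d,e], ?_, ?_⟩
  · intro i j hij
    fin_cases i <;> fin_cases j <;> simp_all
  · intro i j hadj
    fin_cases i <;> fin_cases j <;>
      first
      | (exact absurd hadj (by decide))
      | simp_all [hab, hbc, hcd, hde, hea, hab.symm, hbc.symm, hcd.symm, hde.symm, hea.symm]

lemma keyLem {V : Type*} {G : SimpleGraph V}
    (h3 : ¬ G.ContainsSub (cycleGraph 3)) (h5 : ¬ G.ContainsSub (cycleGraph 5))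
    {p q a b : V} (hpq : G.Adj p q) (hab : G.Adj a b)
    (ha : G.Adj p a ∨ (¬G.Adj p a ∧ ¬G.Adj q a ∧ ∃ z, G.Adj a z ∧ G.Adj q z))
    (hb : G.Adj p b ∨ (¬G.Adj p b ∧ ¬G.Adj q b ∧ ∃ z, G.Adj b z ∧ G.Adj q z)) : False := by
  have mixed : ∀ a b : V, G.Adj a b → G.Adj p a → ¬G.Adj p b → ¬G.Adj q b →
      ∀ z, G.Adj b z → G.Adj q z → False := by
    intro a b hab hpa hpb hqb z hbz hqz
    by_cases haz : a = z
    · subst haz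
      exact noC3 h3 hpq hqz hpa
    · refine noC5 h5 hpa hab hbz hqz.symm hpq.symm ?_ ?_ ?_ ?_ ?_
      · intro h; subst h; exact hqb hpq.symm
      · intro h; subst h; exact hpb hbz.symm
      · exact haz
      · intro h; subst h; exact hqb hab
      · intro h; subst h; exact hpb hpq
  rcases ha with hpa | ⟨hpa, hqa, z, haz, hqz⟩
  · rcases hb with hpb | ⟨hpb, hqb, z, hbz, hqz⟩
    · exact noC3 h3 hpa hab hpb
    · exact mixed a b hab hpa hpb hqb z hbz hqz
  · rcases hb with hpb | ⟨hpb, hqb, w, hbw, hqw⟩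
    · exact mixed b a hab.symm hpb hpa hqa z haz hqz
    · by_cases hzw : z = w
      · subst hzw
        exact noC3 h3 hab hbw haz
      · refine noC5 h5 hqz haz.symm hab hbw hqw.symm ?_ ?_ ?_ ?_ ?_
        · intro h; subst h; exact hpa hpq
        · intro h; subst h; exact hpb hpq
        · intro h; subst h; exact hqb hqz
        · exact hzw
        · intro h; subst h; exact hqa hqw

lemma bddStrong {W : Type*} [Fintype W] [DecidableEq W] (H : SimpleGraph W) :
    BddAbove {n | ∃ F : Finset (Sym2 W), H.IsStrongClique F ∧ F.card = n} := by
  refine ⟨Fintype.card (Sym2 W), ?_⟩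
  rintro n ⟨F, _, rfl⟩
  exact F.card_le_univ

lemma nonemptyStrong {W : Type*} (H : SimpleGraph W) :
    Set.Nonempty {n | ∃ F : Finset (Sym2 W), H.IsStrongClique F ∧ F.card = n} := by
  refine ⟨0, ∅, ⟨?_, ?_⟩, rfl⟩
  · simp
  · intro e he; simp at he

lemma exists_max_strong {W : Type*} [Fintype W] [DecidableEq W] (H : SimpleGraph W) :
    ∃ F : Finset (Sym2 W), H.IsStrongClique F ∧ F.card = H.strongCliqueNumber :=
  Nat.sSup_mem (nonemptyStrong H) (bddStrong H)

lemma le_strongCliqueNumber {W : Type*} [Fintype W] [DecidableEq W] (H : SimpleGraph W)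
    {F : Finset (Sym2 W)} (h : H.IsStrongClique F) : F.card ≤ H.strongCliqueNumber :=
  le_csSup (bddStrong H) ⟨F, h, rfl⟩

/-- Lemma 5.1 (reduction): if `G` is `{C₃, C₅}`-free, then some induced subgraph
`G[S]` is bipartite and has the same strong clique number as `G`. -/
theorem exists_bipartite_induced_same_strongCliqueNumber {V : Type*} [Fintype V] [DecidableEq V]
    (G : SimpleGraph V)
    (h3 : ¬ G.ContainsSub (cycleGraph 3))
    (h5 : ¬ G.ContainsSub (cycleGraph 5)) :
    ∃ S : Finset V, (G.induce (↑S : Set V)).Colorable 2 ∧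
      (G.induce (↑S : Set V)).strongCliqueNumber = G.strongCliqueNumber := by
  classical
  obtain ⟨F, hF, hFcard⟩ := exists_max_strong G
  set S : Finset V := Finset.univ.filter (fun v => ∃ e ∈ F, v ∈ e) with hSdef
  have hmemS : ∀ v : V, v ∈ (↑S : Set V) ↔ ∃ e ∈ F, v ∈ e := by
    intro v; simp [hSdef]
  have hends : ∀ e ∈ F, ∀ x ∈ e, x ∈ (↑S : Set V) := fun e he x hx => (hmemS x).2 ⟨e, he, hx⟩
  have hadj_ind : ∀ (a b : ↥(↑S : Set V)), (G.induce (↑S : Set V)).Adj a b ↔ G.Adj ↑a ↑b := by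
    intro a b; exact Iff.rfl
  refine ⟨S, ?_, ?_⟩
  · -- Colorability
    rcases F.eq_empty_or_nonempty with hFe | ⟨e0, he0⟩
    · have hempty : IsEmpty (↥(↑S : Set V)) := by
        refine ⟨fun x => ?_⟩
        have := (hmemS ↑x).1 x.2
        simp [hFe] at this
      exact ⟨Coloring.mk (fun x => hempty.elim x) (fun {x y} _ => hempty.elim x)⟩
    · revert he0
      induction e0 using Sym2.ind with
      | _ u w =>
        intro he0
        have huw : G.Adj u w := G.mem_edgeSet.1 (hF.1 he0)
        have flip : ∀ a : V, a ∈ (↑S : Set V) →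
            ¬(G.Adj u a ∨ (¬G.Adj u a ∧ ¬G.Adj w a ∧ ∃ z, G.Adj a z ∧ G.Adj w z)) →
            (G.Adj w a ∨ (¬G.Adj w a ∧ ¬G.Adj u a ∧ ∃ z, G.Adj a z ∧ G.Adj u z)) := by
          intro a haS hnP
          push_neg at hnP
          obtain ⟨hua, hrest⟩ := hnP
          by_cases hwa : G.Adj w a
          · exact Or.inl hwa
          · refine Or.inr ⟨hwa, hua, ?_⟩
            obtain ⟨e, he, hae⟩ := (hmemS a).1 haS
            obtain ⟨z, hez⟩ : ∃ z, e = s(a, z) := ⟨Sym2.Mem.other hae, (Sym2.other_spec hae).symm⟩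
            subst hez
            have haz : G.Adj a z := G.mem_edgeSet.1 (hF.1 he)
            have hne : s(a, z) ≠ s(u, w) := by
              intro h
              have hmem : a ∈ s(u, w) := h ▸ Sym2.mem_mk_left a z
              rcases Sym2.mem_iff.1 hmem with rfl | rfl
              · exact hwa huw.symm
              · exact hua huw
            obtain ⟨x, hx, y, hy, hor⟩ := hF.2 _ he _ he0 hne
            rcases Sym2.mem_iff.1 hx with rfl | rfl
            · -- x = a
              rcases Sym2.mem_iff.1 hy with rfl | rfl
              · rcases hor with h | h
                · subst h; exact absurd huw.symm hwa
                · exact absurd h.symm hua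
              · rcases hor with h | h
                · subst h; exact absurd huw hua
                · exact absurd h.symm hwa
            · -- x = z
              refine ⟨x, haz, ?_⟩
              rcases Sym2.mem_iff.1 hy with rfl | rfl
              · rcases hor with h | h
                · subst h; exact absurd haz.symm hua
                · exact h.symm
              · rcases hor with h | h
                · subst h; exact absurd haz.symm hwa
                · exact absurd h.symm (hrest hua hwa x haz)
        refine ⟨Coloring.mk (fun x =>
          if (G.Adj u ↑x ∨ (¬G.Adj u ↑x ∧ ¬G.Adj w ↑x ∧ ∃ z, G.Adj (↑x : V) z ∧ G.Adj w z))
          then (0 : Fin 2) else 1) ?_⟩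
        intro x y hadj
        have hxy : G.Adj ↑x ↑y := (hadj_ind x y).1 hadj
        by_cases hPx : (G.Adj u ↑x ∨ (¬G.Adj u ↑x ∧ ¬G.Adj w ↑x ∧ ∃ z, G.Adj (↑x : V) z ∧ G.Adj w z))
        · by_cases hPy : (G.Adj u ↑y ∨ (¬G.Adj u ↑y ∧ ¬G.Adj w ↑y ∧ ∃ z, G.Adj (↑y : V) z ∧ G.Adj w z))
          · exact (keyLem h3 h5 huw hxy hPx hPy).elim
          · simp [hPx, hPy]
        · by_cases hPy : (G.Adj u ↑y ∨ (¬G.Adj u ↑y ∧ ¬G.Adj w ↑y ∧ ∃ z, G.Adj (↑y : V) z ∧ G.Adj w z))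
          · simp [hPx, hPy]
          · exact (keyLem h3 h5 huw.symm hxy (flip ↑x x.2 hPx) (flip ↑y y.2 hPy)).elim
  · -- equality of strong clique numbers
    refine le_antisymm ?_ ?_
    · -- induced ≤ G
      obtain ⟨F'', hF'', hc''⟩ := exists_max_strong (G.induce (↑S : Set V))
      rw [← hc'']
      have hedge : ∀ e'' : Sym2 (↥(↑S : Set V)), e'' ∈ (G.induce (↑S : Set V)).edgeSet →
          Sym2.map Subtype.val e'' ∈ G.edgeSet := by
        intro e''
        induction e'' using Sym2.ind with
        | _ a b =>
          intro h
          rw [Sym2.map_pair_eq]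
          exact G.mem_edgeSet.2 ((hadj_ind a b).1 (SimpleGraph.mem_edgeSet _ |>.1 h))
      have hinj : Set.InjOn (Sym2.map (Subtype.val : ↥(↑S : Set V) → V)) ↑F'' :=
        (Sym2.map.injective Subtype.val_injective).injOn
      rw [← Finset.card_image_of_injOn hinj]
      refine le_strongCliqueNumber G ⟨?_, ?_⟩
      · intro e he
        simp only [Finset.coe_image, Set.mem_image, Finset.mem_coe] at he
        obtain ⟨e'', he'', rfl⟩ := he
        exact hedge e'' (hF''.1 he'')
      · intro e he f hf hef
        simp only [Finset.mem_image] at he hf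
        obtain ⟨e'', he'', rfl⟩ := he
        obtain ⟨f'', hf'', rfl⟩ := hf
        have hne : e'' ≠ f'' := fun h => hef (by rw [h])
        obtain ⟨x, hx, y, hy, hor⟩ := hF''.2 _ he'' _ hf'' hne
        refine ⟨↑x, Sym2.mem_map.2 ⟨x, hx, rfl⟩, ↑y, Sym2.mem_map.2 ⟨y, hy, rfl⟩, ?_⟩
        rcases hor with h | h
        · exact Or.inl (congrArg Subtype.val h)
        · exact Or.inr ((hadj_ind x y).1 h)
    · -- G ≤ induced
      rw [← hFcard]
      rcases F.eq_empty_or_nonempty with rfl | ⟨e0, he0⟩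
      · simp
      · have hs0 : ∃ v : V, v ∈ (↑S : Set V) :=
          ⟨(Quot.out e0).1, hends e0 he0 _ (Sym2.out_fst_mem e0)⟩
        obtain ⟨s0, hs0⟩ := hs0
        set g : V → ↥(↑S : Set V) := fun v => if h : v ∈ (↑S : Set V) then ⟨v, h⟩ else ⟨s0, hs0⟩
          with hg
        have hgval : ∀ v (h : v ∈ (↑S : Set V)), (g v : V) = v := by
          intro v h; simp only [hg]; rw [dif_pos h]
        have hlift : ∀ e ∈ F, Sym2.map Subtype.val (Sym2.map g e) = e := by
          intro e
          induction e using Sym2.ind with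
          | _ x y =>
            intro he
            have h1 : (g x : V) = x := hgval x (hends _ he x (Sym2.mem_mk_left x y))
            have h2 : (g y : V) = y := hgval y (hends _ he y (Sym2.mem_mk_right x y))
            rw [Sym2.map_map, Sym2.map_pair_eq]
            simp [Function.comp, h1, h2]
        have hinj : Set.InjOn (Sym2.map g) ↑F := by
          intro e1 h1 e2 h2 heq
          have := congrArg (Sym2.map Subtype.val) heq
          rwa [hlift e1 h1, hlift e2 h2] at this
        rw [← Finset.card_image_of_injOn hinj]
        refine le_strongCliqueNumber _ ⟨?_, ?_⟩
        · intro e' he'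
          simp only [Finset.coe_image, Set.mem_image, Finset.mem_coe] at he'
          obtain ⟨e, he, rfl⟩ := he'
          revert he
          induction e using Sym2.ind with
          | _ x y =>
            intro he
            have h1 : (g x : V) = x := hgval x (hends _ he x (Sym2.mem_mk_left x y))
            have h2 : (g y : V) = y := hgval y (hends _ he y (Sym2.mem_mk_right x y))
            rw [Sym2.map_pair_eq]
            refine (SimpleGraph.mem_edgeSet _).2 ((hadj_ind _ _).2 ?_)
            rw [h1, h2]
            exact G.mem_edgeSet.1 (hF.1 he)
        · intro e' he' f' hf' hef
          simp only [Finset.mem_image] at he' hf'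
          obtain ⟨e, he, rfl⟩ := he'
          obtain ⟨f, hf, rfl⟩ := hf'
          have hne : e ≠ f := by
            intro h
            exact hef (by rw [h])
          obtain ⟨x, hx, y, hy, hor⟩ := hF.2 _ he _ hf hne
          refine ⟨g x, Sym2.mem_map.2 ⟨x, hx, rfl⟩, g y, Sym2.mem_map.2 ⟨y, hy, rfl⟩, ?_⟩
          have h1 : (g x : V) = x := hgval x (hends _ he x hx)
          have h2 : (g y : V) = y := hgval y (hends _ hf y hy)
          rcases hor with h | h
          · exact Or.inl (by rw [h])
          · refine Or.inr ((hadj_ind _ _).2 ?_)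
            rw [h1, h2]; exact h
end

section
/- Let k ≥ 2 be an integer and let G be a finite simple bipartite graph with maximum degree Δ. If G contains no cycle on 2k vertices and no cycle on 2k+2 vertices as a subgraph, then ω₂'(G) ≤ max{kΔ, 2k(k − 1)}. -/
open SimpleGraph

/-!
Orient the edges of a strong clique `F` from one side of the bipartition to the other. Two disjoint
edges `x y` and `x' y'` of `F` must then be joined by `x y'` or by `x' y`, so on a matching inside
`F` this relation is a tournament and has a Hamiltonian path. Running along that path through
`k + 1` matching edges and closing it with the edge between the first and the last one gives a
cycle of length `2k` or `2k + 2`. Hence matchings in `F` have at most `k` edges, by König's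
theorem `k` vertices cover `F`, and each of them lies on at most `Δ` edges.
-/

namespace List

variable {α : Type*} {r : α → α → Prop}

/-- The last conjunct, that a common predecessor of `a` and of `l` precedes `l'`, is what lets the
induction step put `b` in front of `l'`. -/
theorem exists_perm_cons_isChain (a : α) :
    ∀ {l : List α}, l.IsChain r → (∀ b ∈ l, r a b ∨ r b a) →
      ∃ l', l' ~ a :: l ∧ l'.IsChain r ∧
        ∀ c, r c a → (∀ y ∈ l.head?, r c y) → ∀ y ∈ l'.head?, r c y
  | [], _, _ => ⟨[a], .rfl, isChain_singleton a, by simp⟩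
  | b :: l, hc, hab => by
    rcases hab b mem_cons_self with h | h
    · exact ⟨a :: b :: l, .rfl, hc.cons (by simpa), fun c hca _ => by simpa⟩
    · obtain ⟨l', hperm, hc', hhead⟩ :=
        exists_perm_cons_isChain a hc.tail fun x hx => hab x (mem_cons_of_mem _ hx)
      exact ⟨b :: l', (hperm.cons b).trans (.swap a b l),
        hc'.cons (hhead b h (isChain_cons.1 hc).1), fun c _ hcb => by simpa using hcb⟩

/-- Rédei's theorem: every tournament has a Hamiltonian path. -/
theorem exists_perm_isChain_of_pairwise :
    ∀ {l : List α}, l.Pairwise (fun a b => r a b ∨ r b a) → ∃ l', l' ~ l ∧ l'.IsChain r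
  | [], _ => ⟨[], .rfl, .nil⟩
  | a :: l, h => by
    obtain ⟨l', hperm, hc⟩ := exists_perm_isChain_of_pairwise h.of_cons
    obtain ⟨l'', hperm', hc', -⟩ := exists_perm_cons_isChain a hc
      fun b hb => (pairwise_cons.1 h).1 b (hperm.mem_iff.1 hb)
    exact ⟨l'', hperm'.trans (hperm.cons a), hc'⟩

theorem nodup_flatMap_swap {l : List (α × α)} (hl : l.Nodup)
    (hfst : ∀ p ∈ l, ∀ q ∈ l, p.1 = q.1 → p = q) (hsnd : ∀ p ∈ l, ∀ q ∈ l, p.2 = q.2 → p = q)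
    (hside : ∀ p ∈ l, ∀ q ∈ l, p.1 ≠ q.2) :
    (l.flatMap fun p => [p.2, p.1]).Nodup := by
  refine nodup_flatMap.2 ⟨fun p hp => by simpa using (hside p hp p hp).symm, ?_⟩
  refine hl.imp_of_mem fun {p q} hp hq hpq => ?_
  have h11 : q.1 ≠ p.1 := fun h => hpq (hfst q hq p hp h).symm
  have h22 : q.2 ≠ p.2 := fun h => hpq (hsnd q hq p hp h).symm
  simp [Function.onFun, h11, h22, hside q hq p hp, (hside p hp q hq).symm]

end List

namespace Finset

variable {α β : Type*} [DecidableEq α] [DecidableEq β]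

def relImage (P : Finset (α × β)) (S : Finset α) : Finset β :=
  (P.filter fun p => p.1 ∈ S).image Prod.snd

theorem mem_relImage {P : Finset (α × β)} {S : Finset α} {b : β} :
    b ∈ P.relImage S ↔ ∃ a ∈ S, (a, b) ∈ P := by
  simp [relImage, and_comm]

theorem exists_matching_of_card_le_card_relImage_add {P : Finset (α × β)} {d : ℕ}
    (h : ∀ S ⊆ P.image Prod.fst, S.card ≤ (P.relImage S).card + d) :
    ∃ M ⊆ P, Set.InjOn Prod.fst (M : Set (α × β)) ∧ Set.InjOn Prod.snd (M : Set (α × β)) ∧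
      (P.image Prod.fst).card ≤ M.card + d := by
  set A := P.image Prod.fst
  -- Hall's theorem after adding `d` new vertices adjacent to every element of `A`.
  let t : A → Finset (β ⊕ Fin d) := fun a => (P.relImage {a.1}).disjSum univ
  obtain ⟨f, hf, hft⟩ := (all_card_le_biUnion_card_iff_exists_injective t).1 fun s => by
    rcases s.eq_empty_or_nonempty with rfl | ⟨a₀, ha₀⟩
    · simp
    calc s.card = (s.map (Function.Embedding.subtype _)).card := (card_map _).symm
      _ ≤ (P.relImage (s.map (Function.Embedding.subtype _))).card + d :=
          h _ fun x hx => by obtain ⟨a, -, rfl⟩ := mem_map.1 hx; exact a.2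
      _ = ((P.relImage (s.map (Function.Embedding.subtype _))).disjSum univ).card := by simp
      _ ≤ (s.biUnion t).card := card_le_card fun x hx => by
          rcases x with b | j
          · have hb : b ∈ P.relImage (s.map (Function.Embedding.subtype _)) := by simpa using hx
            obtain ⟨a, ha, hab⟩ := mem_relImage.1 hb
            obtain ⟨a, has, rfl⟩ := mem_map.1 ha
            exact mem_biUnion.2 ⟨a, has, by simpa [t, mem_relImage] using hab⟩
          · exact mem_biUnion.2 ⟨a₀, ha₀, by simp [t]⟩
  set M := P.filter fun p => ∃ a : A, a.1 = p.1 ∧ f a = .inl p.2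
  refine ⟨M, filter_subset _ _, ?_, ?_, ?_⟩
  · rintro p hp q hq (h : p.1 = q.1)
    obtain ⟨a, ha, hfa⟩ := (mem_filter.1 hp).2
    obtain ⟨a', ha', hfa'⟩ := (mem_filter.1 hq).2
    obtain rfl : a = a' := Subtype.ext (ha.trans (h.trans ha'.symm))
    exact Prod.ext h (Sum.inl_injective (hfa.symm.trans hfa'))
  · rintro p hp q hq (h : p.2 = q.2)
    obtain ⟨a, ha, hfa⟩ := (mem_filter.1 hp).2
    obtain ⟨a', ha', hfa'⟩ := (mem_filter.1 hq).2
    obtain rfl : a = a' := hf (hfa.trans (h ▸ hfa'.symm))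
    exact Prod.ext (ha.symm.trans ha') h
  · have himage : univ.image f ⊆ (M.image Prod.snd).disjSum (univ : Finset (Fin d)) := by
      intro x hx
      obtain ⟨a, -, rfl⟩ := mem_image.1 hx
      cases hfa : f a with
      | inl b =>
        have hab : (a.1, b) ∈ P := by simpa [t, hfa, mem_relImage] using hft a
        exact inl_mem_disjSum.2 (mem_image.2 ⟨(a.1, b), mem_filter.2 ⟨hab, a, rfl, hfa⟩, rfl⟩)
      | inr j => simp
    calc A.card = (univ.image f).card := by simp [card_image_of_injective _ hf]
      _ ≤ ((M.image Prod.snd).disjSum (univ : Finset (Fin d))).card := card_le_card himage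
      _ ≤ M.card + d := by simpa using card_image_le

/-- König's theorem. -/
theorem exists_cover_of_forall_matching_card_le {P : Finset (α × β)} {k : ℕ}
    (h : ∀ M ⊆ P, Set.InjOn Prod.fst (M : Set (α × β)) → Set.InjOn Prod.snd (M : Set (α × β)) →
      M.card ≤ k) :
    ∃ A : Finset α, ∃ B : Finset β, A.card + B.card ≤ k ∧ ∀ p ∈ P, p.1 ∈ A ∨ p.2 ∈ B := by
  set A := P.image Prod.fst
  -- For `S` of maximal deficiency `|S| - |N(S)|`, Hall's theorem with that deficiency yields a
  -- matching as large as the cover `(A \ S) ∪ N(S)`.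
  obtain ⟨S, hSA, hmax⟩ := A.powerset.exists_max_image
    (fun S => (S.card : ℤ) - (P.relImage S).card) ⟨∅, empty_mem_powerset _⟩
  rw [mem_powerset] at hSA
  have hdef : (P.relImage S).card ≤ S.card := by
    have := hmax ∅ (empty_mem_powerset _)
    rw [show P.relImage ∅ = ∅ by ext; simp [mem_relImage]] at this
    simp only [card_empty, CharP.cast_eq_zero, sub_self, sub_nonneg, Nat.cast_le] at this
    exact this
  obtain ⟨M, hMP, hfst, hsnd, (hM : A.card ≤ M.card + (S.card - (P.relImage S).card))⟩ :=
    exists_matching_of_card_le_card_relImage_add (d := S.card - (P.relImage S).card)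
      fun S' hS' => by have := hmax S' (mem_powerset.2 hS'); omega
  refine ⟨A \ S, P.relImage S, ?_, fun p hp => ?_⟩
  · have := h M hMP hfst hsnd
    have := card_le_card hSA
    rw [card_sdiff_of_subset hSA]
    omega
  · by_cases hpS : p.1 ∈ S
    · exact .inr (mem_relImage.2 ⟨p.1, hpS, hp⟩)
    · exact .inl (mem_sdiff.2 ⟨mem_image_of_mem _ hp, hpS⟩)

end Finset

namespace SimpleGraph

variable {V : Type*} {G : SimpleGraph V}

theorem containsSub_cycleGraph_of_isChain {l : List V} (hnd : l.Nodup) (hc : l.IsChain G.Adj)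
    (hclose : ∀ a ∈ l.head?, ∀ b ∈ l.getLast?, G.Adj b a) :
    G.ContainsSub (cycleGraph l.length) := by
  refine ⟨fun i => l[i], fun i j h => Fin.ext (hnd.getElem_inj_iff.1 h), ?_⟩
  have step : ∀ i j : Fin l.length, (i - j).val = 1 → G.Adj l[j] l[i] := by
    rintro ⟨i, hi⟩ ⟨j, hj⟩ hij
    rcases le_or_gt j i with hle | hlt
    · rw [Fin.coe_sub_iff_le.2 hle] at hij
      obtain rfl : i = j + 1 := by simp only at hij; omega
      exact List.isChain_iff_getElem.1 hc j hi
    · rw [Fin.coe_sub_iff_lt.2 hlt] at hij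
      obtain rfl : i = 0 := by simp only at hij; omega
      obtain rfl : j = l.length - 1 := by simp only at hij; omega
      exact hclose _ (by simp [List.head?_eq_getElem?]) _ (by simp [List.getLast?_eq_getElem?])
  intro i j hij
  rcases cycleGraph_adj'.1 hij with h | h
  · exact (step i j h).symm
  · exact step j i h

theorem isChain_adj_flatMap :
    ∀ {l : List (V × V)}, (∀ p ∈ l, G.Adj p.1 p.2) → l.IsChain (fun p q => G.Adj p.1 q.2) →
      (l.flatMap fun p => [p.2, p.1]).IsChain G.Adj
  | [], _, _ => .nil
  | [p], hadj, _ => by simpa using (hadj p (by simp)).symm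
  | p :: q :: l, hadj, hc => by
    have ih := isChain_adj_flatMap (l := q :: l) (fun x hx => hadj x (.tail _ hx)) hc.tail
    simp only [List.flatMap_cons, List.cons_append] at ih ⊢
    exact .cons_cons (hadj p (by simp)).symm (.cons_cons (List.isChain_cons_cons.1 hc).1 ih)

/-- The path `e.2 e.1 … f.2 f.1` runs through the edges `e, m, f` in order: the edge `e.1 f.2`
closes its inner part `e.1 … f.2` into a cycle, the edge `f.1 e.2` closes the whole path. -/
theorem containsSub_cycleGraph_of_adj_or_adj {e f : V × V} {m : List (V × V)}
    (hc : ((e :: (m ++ [f])).flatMap fun p => [p.2, p.1]).IsChain G.Adj)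
    (hnd : ((e :: (m ++ [f])).flatMap fun p => [p.2, p.1]).Nodup)
    (h : G.Adj e.1 f.2 ∨ G.Adj f.1 e.2) :
    G.ContainsSub (cycleGraph (2 * (m.length + 1))) ∨
      G.ContainsSub (cycleGraph (2 * (m.length + 2))) := by
  set L := (e :: (m ++ [f])).flatMap fun p => [p.2, p.1]
  set S := e.1 :: (m.flatMap fun p => [p.2, p.1]) ++ [f.2]
  have hL : L = [e.2] ++ S ++ [f.1] := by simp [L, S]
  have hS : S.length = 2 * (m.length + 1) := by simp [S]; ring
  rcases h with h | h
  · have hinfix : S <:+: L := ⟨[e.2], [f.1], hL.symm⟩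
    have := containsSub_cycleGraph_of_isChain (hnd.sublist hinfix.sublist) (hc.infix hinfix)
      (by simp [S, List.getLast?_cons, List.getLast?_append, h.symm])
    exact .inl (hS ▸ this)
  · have := containsSub_cycleGraph_of_isChain hnd hc
      (by simp [L, List.getLast?_cons, List.getLast?_append, h])
    exact .inr (by rwa [show L.length = 2 * (m.length + 2) by simp [hL, hS]; ring] at this)

theorem card_le_of_forall_adj_or_adj {k : ℕ} (h1 : ¬G.ContainsSub (cycleGraph (2 * k)))
    (h2 : ¬G.ContainsSub (cycleGraph (2 * k + 2))) {M : Finset (V × V)}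
    (hadj : ∀ p ∈ M, G.Adj p.1 p.2) (hfst : Set.InjOn Prod.fst (M : Set (V × V)))
    (hsnd : Set.InjOn Prod.snd (M : Set (V × V)))
    (hside : ∀ p ∈ M, ∀ q ∈ M, p.1 ≠ q.2)
    (htour : ∀ p ∈ M, ∀ q ∈ M, G.Adj p.1 q.2 ∨ G.Adj q.1 p.2) :
    M.card ≤ k := by
  by_contra! hk
  obtain ⟨M', hM', hcard⟩ := Finset.exists_subset_card_eq hk
  obtain ⟨l, hperm, hchain⟩ := List.exists_perm_isChain_of_pairwise (r := fun p q => G.Adj p.1 q.2)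
    (List.pairwise_of_forall_mem_list fun p hp q hq =>
      htour p (hM' (Finset.mem_toList.1 hp)) q (hM' (Finset.mem_toList.1 hq)))
  have hmem : ∀ p ∈ l, p ∈ M := fun p hp => hM' (Finset.mem_toList.1 (hperm.mem_iff.1 hp))
  have hlen : l.length = k + 1 := by rw [hperm.length_eq, Finset.length_toList, hcard]
  have hc := isChain_adj_flatMap (fun p hp => hadj p (hmem p hp)) hchain
  have hnd := List.nodup_flatMap_swap (hperm.nodup_iff.2 M'.nodup_toList)
    (fun p hp q hq => hfst (hmem p hp) (hmem q hq)) (fun p hp q hq => hsnd (hmem p hp) (hmem q hq))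
    (fun p hp q hq => hside p (hmem p hp) q (hmem q hq))
  obtain ⟨e, t, rfl⟩ := List.exists_cons_of_length_eq_add_one hlen
  rcases List.eq_nil_or_concat' t with rfl | ⟨m, f, rfl⟩
  · obtain rfl : k = 0 := by simpa using hlen
    exact h1 ⟨finZeroElim, fun a => a.elim0, fun a => a.elim0⟩
  obtain rfl : k = m.length + 1 := by simp at hlen; omega
  rcases containsSub_cycleGraph_of_adj_or_adj hc hnd (htour e (hmem e (by simp)) f (hmem f (by simp)))
    with h | h
  exacts [h1 h, h2 h]

theorem IsBipartiteWith.adj_or_adj_of_isStrongClique {s t : Set V} (hG : G.IsBipartiteWith s t)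
    {F : Finset (Sym2 V)} (hF : G.IsStrongClique F) {x y x' y' : V} (hx : x ∈ s) (hx' : x' ∈ s)
    (he : s(x, y) ∈ F) (he' : s(x', y') ∈ F) (hxx' : x ≠ x') (hyy' : y ≠ y') :
    G.Adj x y' ∨ G.Adj x' y := by
  have hst : ∀ {v}, v ∈ s → v ∉ t := fun hv => Set.disjoint_left.1 hG.disjoint hv
  have hy : y ∈ t := hG.mem_of_mem_adj hx (hF.1 he)
  have hy' : y' ∈ t := hG.mem_of_mem_adj hx' (hF.1 he')
  have hss : ∀ {v w}, v ∈ s → w ∈ s → ¬G.Adj v w := fun hv hw hvw =>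
    hst hw (hG.mem_of_mem_adj hv hvw)
  have htt : ∀ {v w}, v ∈ t → w ∈ t → ¬G.Adj v w := fun hv hw hvw =>
    hst (hG.symm.mem_of_mem_adj hv hvw) hw
  have hne : s(x, y) ≠ s(x', y') := by
    rw [Ne, Sym2.eq_iff]
    rintro (⟨rfl, -⟩ | ⟨rfl, -⟩)
    exacts [hxx' rfl, hst hx hy']
  obtain ⟨a, ha, b, hb, hab⟩ := hF.2 _ he _ he' hne
  rw [Sym2.mem_iff] at ha hb
  rcases ha with rfl | rfl <;> rcases hb with rfl | rfl <;> rcases hab with hab | hab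
  · exact absurd hab hxx'
  · exact absurd hab (hss hx hx')
  · exact absurd (hab ▸ hx) (hst · hy')
  · exact .inl hab
  · exact absurd (hab ▸ hy) (hst hx')
  · exact .inr hab.symm
  · exact absurd hab hyy'
  · exact absurd hab (htt hy hy')

theorem card_le_card_mul_maxDegree_of_forall_exists_mem [Fintype V] [DecidableRel G.Adj]
    {F : Finset (Sym2 V)} (hF : (F : Set (Sym2 V)) ⊆ G.edgeSet) {W : Finset V}
    (hW : ∀ e ∈ F, ∃ v ∈ W, v ∈ e) : F.card ≤ W.card * G.maxDegree := by
  classical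
  calc F.card ≤ (W.biUnion fun v => G.incidenceFinset v).card := Finset.card_le_card fun e he => by
        obtain ⟨v, hv, hve⟩ := hW e he
        exact Finset.mem_biUnion.2 ⟨v, hv, (G.mem_incidenceFinset v e).2 ⟨hF he, hve⟩⟩
    _ ≤ ∑ v ∈ W, (G.incidenceFinset v).card := Finset.card_biUnion_le
    _ ≤ W.card * G.maxDegree := by
        rw [← smul_eq_mul]
        exact Finset.sum_le_card_nsmul _ _ _ fun v _ =>
          (G.card_incidenceFinset_eq_degree v).trans_le (G.degree_le_maxDegree v)

theorem strongCliqueNumber_le {n : ℕ} (h : ∀ F, G.IsStrongClique F → F.card ≤ n) :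
    G.strongCliqueNumber ≤ n :=
  csSup_le ⟨0, ∅, ⟨by simp, by simp⟩, rfl⟩ (by rintro _ ⟨F, hF, rfl⟩; exact h F hF)

theorem IsStrongClique.card_le_mul_maxDegree [Fintype V] [DecidableRel G.Adj] {k : ℕ}
    (hbip : G.IsBipartite) (h1 : ¬G.ContainsSub (cycleGraph (2 * k)))
    (h2 : ¬G.ContainsSub (cycleGraph (2 * k + 2))) {F : Finset (Sym2 V)}
    (hF : G.IsStrongClique F) : F.card ≤ k * G.maxDegree := by
  classical
  obtain ⟨s, t, hG⟩ := hbip.exists_isBipartiteWith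
  set P : Finset (V × V) := Finset.univ.filter fun p => s(p.1, p.2) ∈ F ∧ p.1 ∈ s
  have hP : ∀ {x y}, (x, y) ∈ P ↔ s(x, y) ∈ F ∧ x ∈ s := by simp [P]
  have hPadj : ∀ p ∈ P, G.Adj p.1 p.2 := fun p hp => hF.1 (hP.1 hp).1
  have hPt : ∀ p ∈ P, p.2 ∈ t := fun p hp => hG.mem_of_mem_adj (hP.1 hp).2 (hPadj p hp)
  obtain ⟨A, B, hAB, hcover⟩ := Finset.exists_cover_of_forall_matching_card_le (P := P) (k := k)
    fun M hMP hfst hsnd => by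
      refine card_le_of_forall_adj_or_adj h1 h2 (fun p hp => hPadj p (hMP hp)) hfst hsnd
        (fun p hp q hq hpq => Set.disjoint_left.1 hG.disjoint (hP.1 (hMP hp)).2
          (hpq ▸ hPt q (hMP hq))) fun p hp q hq => ?_
      by_cases hpq : p = q
      · exact hpq ▸ .inl (hPadj p (hMP hp))
      · exact hG.adj_or_adj_of_isStrongClique hF (hP.1 (hMP hp)).2 (hP.1 (hMP hq)).2
          (hP.1 (hMP hp)).1 (hP.1 (hMP hq)).1 (fun h => hpq (hfst hp hq h))
          (fun h => hpq (hsnd hp hq h))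
  have hcoverF : ∀ e ∈ F, ∃ v ∈ A ∪ B, v ∈ e := by
    intro e he
    induction e using Sym2.ind with
    | _ x y =>
      rcases hG.mem_of_adj (hF.1 he) with ⟨hx, -⟩ | ⟨-, hy⟩
      · rcases hcover (x, y) (hP.2 ⟨he, hx⟩) with h | h
        exacts [⟨x, by simp [h]⟩, ⟨y, by simp [h]⟩]
      · rcases hcover (y, x) (hP.2 ⟨Sym2.eq_swap ▸ he, hy⟩) with h | h
        exacts [⟨y, by simp [h]⟩, ⟨x, by simp [h]⟩]
  calc F.card ≤ (A ∪ B).card * G.maxDegree :=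
        card_le_card_mul_maxDegree_of_forall_exists_mem hF.1 hcoverF
    _ ≤ k * G.maxDegree := Nat.mul_le_mul_right _ ((Finset.card_union_le A B).trans hAB)

end SimpleGraph

theorem strongCliqueNumber_le_of_bipartite_general {V : Type*} [Fintype V]
    (k : ℕ) (G : SimpleGraph V) [DecidableRel G.Adj]
    (hbip : G.Colorable 2)
    (Δ : ℕ) (hΔ : G.maxDegree = Δ)
    (h1 : ¬ G.ContainsSub (cycleGraph (2 * k)))
    (h2 : ¬ G.ContainsSub (cycleGraph (2 * k + 2))) :
    G.strongCliqueNumber ≤ max (k * Δ) (2 * k * (k - 1)) :=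
  strongCliqueNumber_le fun _ hF =>
    hΔ ▸ (hF.card_le_mul_maxDegree hbip h1 h2).trans (le_max_left _ _)

/-- Theorem 5.2: if `k ≥ 2` and `G` is a `{C_{2k}, C_{2k+2}}`-free bipartite graph with
maximum degree `Δ`, then `ω₂'(G) ≤ max {kΔ, 2k(k - 1)}`. -/
theorem strongCliqueNumber_le_of_bipartite {V : Type*} [Fintype V] [DecidableEq V]
    (k : ℕ) (hk : 2 ≤ k) (G : SimpleGraph V) [DecidableRel G.Adj]
    (hbip : G.Colorable 2)
    (Δ : ℕ) (hΔ : G.maxDegree = Δ)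
    (h1 : ¬ G.ContainsSub (cycleGraph (2 * k)))
    (h2 : ¬ G.ContainsSub (cycleGraph (2 * k + 2))) :
    G.strongCliqueNumber ≤ max (k * Δ) (2 * k * (k - 1)) :=
  strongCliqueNumber_le_of_bipartite_general k G hbip Δ hΔ h1 h2
end

section
/- Let k ≥ 2 be an integer, let G be a finite simple graph containing no cycle on 2k vertices as a subgraph, and let uv be an edge of G. Then the subgraph of G induced by the set A = (N(u) ∪ N(v)) \ {u, v} contains no path on 2k−1 vertices as a subgraph. -/
open SimpleGraph

/-- If a cyclic sequence of `n` distinct vertices has consecutive vertices adjacent,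
then `G` contains `cycleGraph n`. -/
private lemma containsCycle_of {V : Type*} (G : SimpleGraph V) (n : ℕ) (hn : 2 ≤ n)
    (g : ℕ → V)
    (hinj : ∀ i j, i < n → j < n → g i = g j → i = j)
    (hadj : ∀ i, i + 1 < n → G.Adj (g i) (g (i + 1)))
    (hwrap : G.Adj (g (n - 1)) (g 0)) :
    G.ContainsSub (cycleGraph n) := by
  refine ⟨fun i => g i.val, ?_, ?_⟩
  · intro a b hab
    exact Fin.ext (hinj _ _ a.isLt b.isLt hab)
  · have key : ∀ c d : Fin n, (d - c).val = 1 → G.Adj (g c.val) (g d.val) := by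
      intro c d h
      rw [Fin.sub_def] at h
      simp only at h
      have hc := c.isLt
      have hd := d.isLt
      have htwo : (n - c.val + d.val) < 2 * n := by omega
      have hcase : d.val = c.val + 1 ∨ (c.val = n - 1 ∧ d.val = 0) := by
        rcases Nat.lt_or_ge (n - c.val + d.val) n with h1 | h1
        · rw [Nat.mod_eq_of_lt h1] at h
          omega
        · have h2 : (n - c.val + d.val) % n = n - c.val + d.val - n := by
            rw [Nat.mod_eq_sub_mod h1, Nat.mod_eq_of_lt (by omega)]
          rw [h2] at h
          omega
      rcases hcase with h1 | ⟨h1, h2⟩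
      · rw [h1]
        exact hadj c.val (by omega)
      · rw [h1, h2]
        exact hwrap
    intro a b hab
    rw [cycleGraph_adj'] at hab
    rcases hab with h | h
    · exact (key b a h).symm
    · exact key a b h

/-- Shape N: a path `p 0, …, p (2k-2)` whose two ends are joined to a vertex `w`
not on the path yields a `2k`-cycle. -/
private lemma shapeN {V : Type*} (G : SimpleGraph V) (k : ℕ) (hk : 2 ≤ k) (p : ℕ → V) (w : V)
    (hpinj : ∀ i j, i < 2 * k - 1 → j < 2 * k - 1 → p i = p j → i = j)
    (hpw : ∀ i, i < 2 * k - 1 → p i ≠ w)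
    (hpadj : ∀ i, i + 1 < 2 * k - 1 → G.Adj (p i) (p (i + 1)))
    (h0 : G.Adj w (p 0)) (hL : G.Adj w (p (2 * k - 2))) :
    G.ContainsSub (cycleGraph (2 * k)) := by
  apply containsCycle_of G (2 * k) (by omega) (fun i => if i = 0 then w else p (i - 1))
  · intro i j hi hj hij
    by_cases h1 : i = 0 <;> by_cases h2 : j = 0 <;>
      simp only [h1, h2, if_pos, if_neg, ite_true, ite_false] at hij
    · omega
    · exact absurd hij.symm (hpw (j - 1) (by omega))
    · exact absurd hij (hpw (i - 1) (by omega))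
    · have := hpinj (i - 1) (j - 1) (by omega) (by omega) hij
      omega
  · intro i hi
    by_cases h1 : i = 0
    · subst h1
      simpa using h0
    · have h2 : i + 1 ≠ 0 := by omega
      simp only [h1, h2, ite_false]
      have := hpadj (i - 1) (by omega)
      have he : i - 1 + 1 = i := by omega
      rwa [he] at this
  · have h1 : 2 * k - 1 ≠ 0 := by omega
    simp only [h1, ite_false, ite_true]
    have he : 2 * k - 1 - 1 = 2 * k - 2 := by omega
    rw [he]
    exact hL.symm

/-- Shape I: cycle `u, p 0, …, p m, v, p (2k-2), …, p (m+2), u` (where when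
`m = 2k-3` the last segment is empty and the cycle closes via the edge `vu`). -/
private lemma shapeI {V : Type*} (G : SimpleGraph V) (k : ℕ) (hk : 2 ≤ k) (p : ℕ → V)
    (u v : V) (huv : G.Adj u v)
    (hpinj : ∀ i j, i < 2 * k - 1 → j < 2 * k - 1 → p i = p j → i = j)
    (hpu : ∀ i, i < 2 * k - 1 → p i ≠ u)
    (hpv : ∀ i, i < 2 * k - 1 → p i ≠ v)
    (hpadj : ∀ i, i + 1 < 2 * k - 1 → G.Adj (p i) (p (i + 1)))
    (m : ℕ) (hm : m ≤ 2 * k - 3)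
    (hu0 : G.Adj u (p 0)) (hvm : G.Adj v (p m))
    (hlast : m + 2 < 2 * k - 1 → G.Adj v (p (2 * k - 2)) ∧ G.Adj u (p (m + 2))) :
    G.ContainsSub (cycleGraph (2 * k)) := by
  apply containsCycle_of G (2 * k) (by omega)
    (fun i => if i = 0 then u else if i ≤ m + 1 then p (i - 1) else if i = m + 2 then v
      else p (2 * k + m + 1 - i))
  · intro i j hi hj hij
    have hne := huv.ne
    split_ifs at hij with a1 a2 a3 b1 b2 b3 c1 c2 d1 d2 d3 e1 e2
    all_goals first
      | omega
      | (exact absurd hij.symm (hpu _ (by omega)))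
      | (exact absurd hij (hpu _ (by omega)))
      | (exact absurd hij.symm (hpv _ (by omega)))
      | (exact absurd hij (hpv _ (by omega)))
      | (exact absurd hij hne)
      | (exact absurd hij.symm hne)
      | (have := hpinj _ _ (by omega) (by omega) hij; omega)
  · intro i hi
    by_cases h0 : i = 0
    · subst h0
      have : (0 : ℕ) + 1 ≤ m + 1 := by omega
      simp only [ite_true, Nat.add_eq, this, if_pos, if_neg (by omega : ¬(0:ℕ)+1 = 0)]
      simpa using hu0
    · by_cases h1 : i ≤ m
      · have e1 : ¬ i + 1 = 0 := by omega
        have e2 : i + 1 ≤ m + 1 := by omega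
        simp only [h0, e1, e2, if_neg, if_pos, ite_false, if_pos (by omega : i ≤ m + 1)]
        have := hpadj (i - 1) (by omega)
        have he : i - 1 + 1 = i := by omega
        rwa [he] at this
      · by_cases h2 : i = m + 1
        · subst h2
          simp only [if_neg (by omega : ¬ m + 1 = 0), if_pos (le_refl (m + 1)),
            if_neg (by omega : ¬ m + 1 + 1 = 0), if_neg (by omega : ¬ m + 1 + 1 ≤ m + 1),
            if_pos (by omega : m + 1 + 1 = m + 2)]
          have he : m + 1 - 1 = m := by omega
          rw [he]
          exact hvm.symm
        · by_cases h3 : i = m + 2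
          · subst h3
            have hm2 : m + 2 < 2 * k - 1 := by omega
            simp only [if_neg (by omega : ¬ m + 2 = 0), if_neg (by omega : ¬ m + 2 ≤ m + 1),
              if_pos rfl, if_neg (by omega : ¬ m + 2 + 1 = 0),
              if_neg (by omega : ¬ m + 2 + 1 ≤ m + 1), if_neg (by omega : ¬ m + 2 + 1 = m + 2)]
            have he : 2 * k + m + 1 - (m + 2 + 1) = 2 * k - 2 := by omega
            rw [he]
            exact (hlast hm2).1
          · -- m + 3 ≤ i ≤ 2k - 2
            have h4 : m + 3 ≤ i := by omega
            simp only [if_neg (by omega : ¬ i = 0), if_neg (by omega : ¬ i ≤ m + 1),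
              if_neg h3, if_neg (by omega : ¬ i + 1 = 0),
              if_neg (by omega : ¬ i + 1 ≤ m + 1), if_neg (by omega : ¬ i + 1 = m + 2)]
            have := (hpadj (2 * k + m - i) (by omega)).symm
            have he : 2 * k + m - i + 1 = 2 * k + m + 1 - i := by omega
            have he2 : 2 * k + m + 1 - (i + 1) = 2 * k + m - i := by omega
            rw [he] at this
            rwa [he2]
  · by_cases h5 : m = 2 * k - 3
    · have he : 2 * k - 1 = m + 2 := by omega
      simp only [if_neg (by omega : ¬ 2 * k - 1 = 0),
        if_neg (by omega : ¬ 2 * k - 1 ≤ m + 1), if_pos he, ite_true]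
      exact huv.symm
    · have hm2 : m + 2 < 2 * k - 1 := by omega
      simp only [if_neg (by omega : ¬ 2 * k - 1 = 0),
        if_neg (by omega : ¬ 2 * k - 1 ≤ m + 1), if_neg (by omega : ¬ 2 * k - 1 = m + 2),
        ite_true]
      have he : 2 * k + m + 1 - (2 * k - 1) = m + 2 := by omega
      rw [he]
      exact ((hlast hm2).2).symm

/-- The mixed case: one end of the path is joined to `u`, the other to `v`. -/
private lemma lemC {V : Type*} (G : SimpleGraph V) (k : ℕ) (hk : 2 ≤ k) (p : ℕ → V)
    (u v : V) (huv : G.Adj u v)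
    (hpinj : ∀ i j, i < 2 * k - 1 → j < 2 * k - 1 → p i = p j → i = j)
    (hpu : ∀ i, i < 2 * k - 1 → p i ≠ u)
    (hpv : ∀ i, i < 2 * k - 1 → p i ≠ v)
    (hpadj : ∀ i, i + 1 < 2 * k - 1 → G.Adj (p i) (p (i + 1)))
    (hmem : ∀ i, i < 2 * k - 1 → G.Adj u (p i) ∨ G.Adj v (p i))
    (hu0 : G.Adj u (p 0)) (hvL : G.Adj v (p (2 * k - 2))) :
    G.ContainsSub (cycleGraph (2 * k)) := by
  by_cases h1 : G.Adj v (p (2 * k - 3))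
  · -- cycle u, p 0, …, p (2k-3), v, u
    exact shapeI G k hk p u v huv hpinj hpu hpv hpadj (2 * k - 3) le_rfl hu0
      (by rwa [show 2 * k - 3 = 2 * k - 3 from rfl]) (by omega)
  · by_cases h2 : G.Adj u (p 1)
    · -- reversed path, roles of u and v swapped: cycle v, p (2k-2), …, p 1, u, v
      have h2k : 2 ≤ k := hk
      refine shapeI G k hk (fun i => p (2 * k - 2 - i)) v u huv.symm ?_ ?_ ?_ ?_
        (2 * k - 3) le_rfl ?_ ?_ ?_
      · intro i j hi hj hij
        have := hpinj (2 * k - 2 - i) (2 * k - 2 - j) (by omega) (by omega) hij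
        omega
      · intro i hi
        exact hpv _ (by omega)
      · intro i hi
        exact hpu _ (by omega)
      · intro i hi
        have := (hpadj (2 * k - 3 - i) (by omega)).symm
        have he : 2 * k - 3 - i + 1 = 2 * k - 2 - i := by omega
        have he2 : 2 * k - 2 - (i + 1) = 2 * k - 3 - i := by omega
        rw [he] at this
        show G.Adj (p (2 * k - 2 - i)) (p (2 * k - 2 - (i + 1)))
        rwa [he2]
      · simpa using hvL
      · have he : 2 * k - 2 - (2 * k - 3) = 1 := by omega
        simp only [he]
        exact h2
      · intro h
        omega
    · -- neither: find the switch point using parity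
      have hL3 : G.Adj u (p (2 * k - 3)) := by
        rcases hmem (2 * k - 3) (by omega) with h | h
        · exact h
        · exact absurd h h1
      have hex : ∃ j, Odd j ∧ j < 2 * k - 2 ∧ G.Adj u (p j) :=
        ⟨2 * k - 3, ⟨k - 2, by omega⟩, by omega, hL3⟩
      classical
      let j₀ := Nat.find hex
      obtain ⟨hj₀odd, hj₀lt, hj₀adj⟩ : Odd j₀ ∧ j₀ < 2 * k - 2 ∧ G.Adj u (p j₀) :=
        Nat.find_spec hex
      have hj₀ne1 : j₀ ≠ 1 := by
        intro h
        rw [h] at hj₀adj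
        exact h2 hj₀adj
      obtain ⟨c, hc⟩ := hj₀odd
      have hj₀3 : 3 ≤ j₀ := by omega
      have hmlt : ¬ (Odd (j₀ - 2) ∧ j₀ - 2 < 2 * k - 2 ∧ G.Adj u (p (j₀ - 2))) :=
        Nat.find_min hex (by omega)
      have hmu : ¬ G.Adj u (p (j₀ - 2)) := by
        intro h
        exact hmlt ⟨⟨c - 1, by omega⟩, by omega, h⟩
      have hmv : G.Adj v (p (j₀ - 2)) := by
        rcases hmem (j₀ - 2) (by omega) with h | h
        · exact absurd h hmu
        · exact h
      refine shapeI G k hk p u v huv hpinj hpu hpv hpadj (j₀ - 2) (by omega) hu0 hmv ?_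
      intro h
      have he : j₀ - 2 + 2 = j₀ := by omega
      rw [he]
      exact ⟨hvL, hj₀adj⟩

/-- Claim 3.5(1): if `G` is `C_{2k}`-free and `uv` is an edge of `G`, then the subgraph
induced by `A = (N(u) ∪ N(v)) \ {u, v}` is `P_{2k-1}`-free. -/
theorem induce_edgeNeighborhood_pathFree {V : Type*} [Fintype V] [DecidableEq V]
    (k : ℕ) (hk : 2 ≤ k) (G : SimpleGraph V)
    (hfree : ¬ G.ContainsSub (cycleGraph (2 * k))) {u v : V} (huv : G.Adj u v) :
    ¬ (G.induce ((G.neighborSet u ∪ G.neighborSet v) \ {u, v})).ContainsSub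
      (pathGraph (2 * k - 1)) := by
  rintro ⟨f, hfinj, hfadj⟩
  apply hfree
  have hk0 : 0 < 2 * k - 1 := by omega
  let p : ℕ → V := fun i => if h : i < 2 * k - 1 then (f ⟨i, h⟩ : V) else (f ⟨0, hk0⟩ : V)
  have hpval : ∀ i (h : i < 2 * k - 1), p i = (f ⟨i, h⟩ : V) := fun i h => dif_pos h
  have hpmem : ∀ i, i < 2 * k - 1 →
      p i ∈ (G.neighborSet u ∪ G.neighborSet v) \ {u, v} := by
    intro i h
    rw [hpval i h]
    exact (f ⟨i, h⟩).2
  have hpinj : ∀ i j, i < 2 * k - 1 → j < 2 * k - 1 → p i = p j → i = j := by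
    intro i j hi hj hij
    rw [hpval i hi, hpval j hj] at hij
    have h2 : (⟨i, hi⟩ : Fin (2 * k - 1)) = ⟨j, hj⟩ := hfinj (Subtype.ext hij)
    exact congrArg Fin.val h2
  have hpu : ∀ i, i < 2 * k - 1 → p i ≠ u := by
    intro i h he
    exact (hpmem i h).2 (by rw [he]; exact Set.mem_insert u {v})
  have hpv : ∀ i, i < 2 * k - 1 → p i ≠ v := by
    intro i h he
    exact (hpmem i h).2 (by rw [he]; exact Set.mem_insert_of_mem u rfl)
  have hmem : ∀ i, i < 2 * k - 1 → G.Adj u (p i) ∨ G.Adj v (p i) := by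
    intro i h
    rcases (hpmem i h).1 with h' | h'
    · exact Or.inl h'
    · exact Or.inr h'
  have hpadj : ∀ i, i + 1 < 2 * k - 1 → G.Adj (p i) (p (i + 1)) := by
    intro i h
    rw [hpval i (by omega), hpval (i + 1) h]
    have := hfadj ⟨i, by omega⟩ ⟨i + 1, h⟩ (by rw [pathGraph_adj]; exact Or.inl rfl)
    rw [comap_adj] at this
    exact this
  rcases hmem 0 (by omega) with h0 | h0 <;> rcases hmem (2 * k - 2) (by omega) with hL | hL
  · exact shapeN G k hk p u hpinj hpu hpadj h0 hL
  · exact lemC G k hk p u v huv hpinj hpu hpv hpadj hmem h0 hL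
  · exact lemC G k hk p v u huv.symm hpinj hpv hpu hpadj
      (fun i h => (hmem i h).symm) h0 hL
  · exact shapeN G k hk p v hpinj hpv hpadj h0 hL
end

section
/- Let k ≥ 2 be an integer, let G be a finite simple graph containing no cycle on 2k vertices as a subgraph, let u be a vertex of G, let S ⊆ N(u), and let T be a set of vertices of G disjoint from N(u) ∪ {u}. Then the bipartite subgraph of G consisting of exactly those edges with one endpoint in S and one endpoint in T contains no path on 2k+1 vertices as a subgraph. -/
open SimpleGraph

/-! A copy of `P_{2k+1}` in `G.betweenGraph S T` alternates between `S` and `T`. One of its first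
two vertices lies in `S`, and the `2k - 1` path vertices starting there form a path whose two ends
lie in `S ⊆ N(u)`. As `u ∉ S ∪ T`, joining `u` to both ends closes a cycle on `2k` vertices. -/

namespace SimpleGraph

variable {V W : Type*}

theorem containsSub_iff_isContained (G : SimpleGraph V) (H : SimpleGraph W) :
    G.ContainsSub H ↔ H ⊑ G :=
  ⟨fun ⟨f, hf, hadj⟩ ↦ ⟨⟨⟨f, hadj _ _⟩, hf⟩⟩, fun ⟨f⟩ ↦ ⟨f, f.injective, fun _ _ ↦ f.toHom.map_adj⟩⟩

theorem cycleGraph_adj_iff_val {n : ℕ} {a b : Fin (n + 2)} :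
    (cycleGraph (n + 2)).Adj a b ↔ a.val + 1 = b.val ∨ b.val + 1 = a.val ∨
      (a.val = 0 ∧ b.val = n + 1) ∨ (a.val = n + 1 ∧ b.val = 0) := by
  have := a.isLt
  have := b.isLt
  rw [cycleGraph_adj']
  rcases lt_trichotomy a b with h | rfl | h
  · rw [Fin.coe_sub_iff_lt.mpr h, Fin.sub_val_of_le h.le]
    rw [Fin.lt_def] at h
    omega
  · rw [sub_self, Fin.val_zero]
    omega
  · rw [Fin.coe_sub_iff_lt.mpr h, Fin.sub_val_of_le h.le]
    rw [Fin.lt_def] at h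
    omega

def Copy.pathGraphShift {m n : ℕ} (o : ℕ) (h : o + m ≤ n) : Copy (pathGraph m) (pathGraph n) :=
  Hom.toCopy ⟨fun i ↦ ⟨o + i, by omega⟩, fun hij ↦ by
      simp only [pathGraph_adj] at hij ⊢
      omega⟩
    fun i j hij ↦ by simpa [Fin.ext_iff] using hij

theorem pathGraph_exists_adj {n : ℕ} (hn : 2 ≤ n) (x : Fin n) : ∃ y, (pathGraph n).Adj x y := by
  simp only [pathGraph_adj]
  by_cases hx : x.val + 1 < n
  · exact ⟨⟨x.val + 1, hx⟩, Or.inl rfl⟩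
  · exact ⟨⟨x.val - 1, by omega⟩, Or.inr (Nat.sub_add_cancel (by omega))⟩

variable {G : SimpleGraph V}

theorem cycleGraph_isContained_of_path {m : ℕ} (f : Copy (pathGraph (m + 1)) G) {u : V}
    (hu : u ∉ Set.range f) (h0 : G.Adj u (f 0)) (hlast : G.Adj u (f (Fin.last m))) :
    cycleGraph (m + 2) ⊑ G := by
  refine ⟨Hom.toCopy ⟨Fin.cons u f, fun {a b} hab ↦ ?_⟩
    (Fin.cons_injective_iff.mpr ⟨hu, f.injective⟩)⟩
  rw [cycleGraph_adj_iff_val] at hab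
  induction a using Fin.cases <;> induction b using Fin.cases
  case zero.zero => omega
  case zero.succ b =>
    simp only [Fin.val_zero, Fin.val_succ] at hab
    obtain rfl | rfl : b = 0 ∨ b = Fin.last m := by simp only [Fin.ext_iff]; grind
    exacts [h0, hlast]
  case succ.zero a =>
    simp only [Fin.val_zero, Fin.val_succ] at hab
    obtain rfl | rfl : a = 0 ∨ a = Fin.last m := by simp only [Fin.ext_iff]; grind
    exacts [h0.symm, hlast.symm]
  case succ.succ a b =>
    simp only [Fin.val_succ] at hab
    have : (pathGraph (m + 1)).Adj a b := pathGraph_adj.mpr (by omega)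
    exact f.toHom.map_adj this

section betweenGraph

variable {S T : Set V} {a b c : V}

theorem betweenGraph_le (S T : Set V) : G.betweenGraph S T ≤ G := fun _ _ h ↦ h.1

theorem betweenGraph.mem_union_of_adj (h : (G.betweenGraph S T).Adj a b) : a ∈ S ∪ T :=
  h.2.elim (fun h ↦ .inl h.1) (fun h ↦ .inr h.1)

theorem betweenGraph.mem_or_mem_of_adj (h : (G.betweenGraph S T).Adj a b) : a ∈ S ∨ b ∈ S :=
  h.2.imp (·.1) (·.2)

theorem betweenGraph.mem_of_adj_of_adj (hST : Disjoint S T) (hab : (G.betweenGraph S T).Adj a b)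
    (hbc : (G.betweenGraph S T).Adj b c) (ha : a ∈ S) : c ∈ S := by
  rcases hab.2 with ⟨-, hb⟩ | ⟨ha', -⟩
  · rcases hbc.2 with ⟨hb', -⟩ | ⟨-, hc⟩
    · exact absurd hb (Set.disjoint_left.mp hST hb')
    · exact hc
  · exact absurd ha' (Set.disjoint_left.mp hST ha)

variable {n : ℕ} (f : pathGraph n →g G.betweenGraph S T)

theorem betweenGraph.pathGraph_hom_mem_union (hn : 2 ≤ n) (x : Fin n) : f x ∈ S ∪ T :=
  have ⟨_, hxy⟩ := pathGraph_exists_adj hn x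
  mem_union_of_adj (f.map_adj hxy)

theorem betweenGraph.pathGraph_hom_add_two_mul_mem (hST : Disjoint S T) {i : ℕ} (hi : i < n)
    (hS : f ⟨i, hi⟩ ∈ S) : ∀ j (hj : i + 2 * j < n), f ⟨i + 2 * j, hj⟩ ∈ S
  | 0, _ => hS
  | j + 1, hj =>
    mem_of_adj_of_adj hST (b := f ⟨i + 2 * j + 1, by omega⟩)
      (f.map_adj (pathGraph_adj.mpr (.inl rfl))) (f.map_adj (pathGraph_adj.mpr (.inl rfl)))
      (pathGraph_hom_add_two_mul_mem hST hi hS j (by omega))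

end betweenGraph

end SimpleGraph

theorem betweenGraph_pathFree_of_evenCycleFree_general {V : Type*}
    (k : ℕ) (hk : 2 ≤ k) (G : SimpleGraph V)
    (hfree : ¬ G.ContainsSub (cycleGraph (2 * k))) (u : V) (S T : Set V)
    (hS : S ⊆ G.neighborSet u) (hT : Disjoint T (G.neighborSet u ∪ {u})) :
    ¬ (G.betweenGraph S T).ContainsSub (pathGraph (2 * k + 1)) := by
  rw [containsSub_iff_isContained] at hfree ⊢
  rintro ⟨p⟩
  obtain ⟨m, rfl⟩ : ∃ m, k = m + 1 := ⟨k - 1, by omega⟩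
  have hST : Disjoint S T :=
    Set.disjoint_left.mpr fun x hxS hxT ↦ Set.disjoint_left.mp hT hxT (.inl (hS hxS))
  have huST : u ∉ S ∪ T := by
    rintro (huS | huT)
    · exact G.loopless.irrefl u (hS huS)
    · exact Set.disjoint_left.mp hT huT (.inr rfl)
  obtain ⟨o, ho, hoS⟩ : ∃ o, ∃ ho : o ≤ 1, p ⟨o, by omega⟩ ∈ S :=
    (betweenGraph.mem_or_mem_of_adj (p.toHom.map_adj (pathGraph_adj.mpr (.inl rfl)))).elim
      (⟨0, zero_le_one, ·⟩) (⟨1, le_rfl, ·⟩)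
  let q : Copy (pathGraph (2 * m + 1)) G :=
    (Copy.ofLE _ _ (betweenGraph_le S T)).comp (p.comp (Copy.pathGraphShift o (by omega)))
  refine hfree ?_
  rw [show 2 * (m + 1) = 2 * m + 2 by ring]
  refine cycleGraph_isContained_of_path q ?_ (hS hoS) (hS ?_)
  · rintro ⟨i, hi⟩
    exact huST (hi ▸ betweenGraph.pathGraph_hom_mem_union p.toHom (by omega) _)
  · exact betweenGraph.pathGraph_hom_add_two_mul_mem p.toHom hST _ hoS m (by omega)

/-- Claim 3.5(2): if `G` is `C_{2k}`-free, `S ⊆ N(u)` and `T` is disjoint from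
`N(u) ∪ {u}`, then the bipartite subgraph of edges between `S` and `T` is
`P_{2k+1}`-free. -/
theorem betweenGraph_pathFree_of_evenCycleFree {V : Type*} [Fintype V] [DecidableEq V]
    (k : ℕ) (hk : 2 ≤ k) (G : SimpleGraph V)
    (hfree : ¬ G.ContainsSub (cycleGraph (2 * k))) (u : V) (S T : Set V)
    (hS : S ⊆ G.neighborSet u) (hT : Disjoint T (G.neighborSet u ∪ {u})) :
    ¬ (G.betweenGraph S T).ContainsSub (pathGraph (2 * k + 1)) :=
  betweenGraph_pathFree_of_evenCycleFree_general k hk G hfree u S T hS hT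
end
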